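/- arXiv:1803.09539 — 10 statements merged into one kernel-verified Lean document; each statement's English description precedes it below -/
import Mathlib

section
/- Let δ ∈ (0,1] and L_A > 0, and assume f is L_A-smooth with respect to the atomic norm on lin(A). Let x⋆ ∈ lin(A) be a minimizer of f over lin(A) and let R_A ≥ 0 satisfy ‖x − x⋆‖_A ≤ R_A for every x ∈ lin(A) with f(x) ≤ f(x₀). Starting from x₀ ∈ lin(A), define iterates by choosing z_t ∈ A with ⟨∇f(x_t), z_t⟩ ≤ δ · min_{z∈A} ⟨∇f(x_t), z⟩ (approximate LMO) and setting x_{t+1} = x_t − (⟨∇f(x_t), z_t⟩/L_A)·z_t. Then for every t ≥ 0: f(x_{t+1}) − f(x⋆) ≤ 2·L_A·R_A² / (δ²·(t + 2)). -/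
open Submodule Set Pointwise RealInnerProductSpace

/-!
A step along an atom `z_t` (atomic norm `≤ 1`) decreases `f` by at least
`⟪∇f(x_t), z_t⟫² / (2 L)`, by smoothness. Convexity and the symmetry of `A` bound the gap
`h_t = f(x_t) - f(x⋆)` by `R · max_{z ∈ A} ⟪-∇f(x_t), z⟫`, and the approximate LMO makes
`-⟪∇f(x_t), z_t⟫` at least `δ` times this maximum. Hence `h_t² ≤ C (h_t - h_{t+1})` with
`C = 2 L R² / δ²`, a recurrence which forces `h_{t+1} ≤ C / (t + 2)`.
-/

theorem ConvexOn.add_inner_le_of_hasGradientAt {H : Type*} [NormedAddCommGroup H]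
    [InnerProductSpace ℝ H] [CompleteSpace H] {s : Set H} {f : H → ℝ} {g x y : H}
    (hf : ConvexOn ℝ s f) (hx : x ∈ s) (hy : y ∈ s) (hg : HasGradientAt f g x) :
    f x + ⟪g, y - x⟫ ≤ f y := by
  let ρ : ℝ →ᵃ[ℝ] H := AffineMap.lineMap x y
  have hρ : HasFDerivAt f (InnerProductSpace.toDual ℝ H g) (ρ 0) := by
    simpa [ρ] using hg.hasFDerivAt
  have hderiv : HasDerivAt (f ∘ ρ) ⟪g, y - x⟫ 0 := by
    simpa using hρ.comp_hasDerivAt (0 : ℝ) AffineMap.hasDerivAt_lineMap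
  have hslope := (hf.comp_affineMap ρ).le_slope_of_hasDerivAt (by simpa [ρ] using hx)
    (by simpa [ρ] using hy) one_pos hderiv
  simp only [slope_def_field, Function.comp_apply, ρ, AffineMap.lineMap_apply_zero,
    AffineMap.lineMap_apply_one, sub_zero, div_one] at hslope
  linarith

theorem LinearMap.apply_le_gauge_convexHull_mul {E : Type*} [AddCommGroup E] [Module ℝ E]
    {A : Set E} {ℓ : E →ₗ[ℝ] ℝ} {M : ℝ} {v : E} (hM : 0 ≤ M) (hA : ∀ w ∈ A, ℓ w ≤ M)
    (hv : ∃ c : ℝ, 0 < c ∧ v ∈ c • convexHull ℝ A) :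
    ℓ v ≤ gauge (convexHull ℝ A) v * M := by
  have hscaled : ∀ r, 0 < r → v ∈ r • convexHull ℝ A → ℓ v ≤ r * M := by
    rintro r hr ⟨u, hu, rfl⟩
    rw [ℓ.map_smul, smul_eq_mul]
    exact mul_le_mul_of_nonneg_left (convexHull_min hA (convex_halfSpace_le ℓ.isLinear M) hu) hr.le
  obtain ⟨c, hc, hvc⟩ := hv
  rcases hM.eq_or_lt with rfl | hM
  · simpa using hscaled c hc hvc
  · rw [← div_le_iff₀ hM, gauge_def]
    exact le_csInf ⟨c, hc, hvc⟩ fun r ⟨hr, hvr⟩ => (div_le_iff₀ hM).2 (hscaled r hr hvr)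

theorem IsCompact.sInf_inner_le {H : Type*} [NormedAddCommGroup H] [InnerProductSpace ℝ H]
    {A : Set H} (hA : IsCompact A) (g : H) {w : H} (hw : w ∈ A) :
    sInf ((fun w => ⟪g, w⟫) '' A) ≤ ⟪g, w⟫ :=
  csInf_le (hA.image (continuous_const.inner continuous_id)).bddBelow (mem_image_of_mem _ hw)

theorem ConvexOn.sub_le_mul_neg_sInf_inner {H : Type*} [NormedAddCommGroup H]
    [InnerProductSpace ℝ H] [CompleteSpace H] {s A : Set H} {f : H → ℝ} {g x y : H} {R : ℝ}
    (hf : ConvexOn ℝ s f) (hx : x ∈ s) (hy : y ∈ s) (hg : HasGradientAt f g x)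
    (hA : IsCompact A) (hsym : ∀ w ∈ A, -w ∈ A) (hne : A.Nonempty)
    (habs : ∃ c : ℝ, 0 < c ∧ x - y ∈ c • convexHull ℝ A)
    (hR : gauge (convexHull ℝ A) (x - y) ≤ R) :
    f x - f y ≤ R * -sInf ((fun w => ⟪g, w⟫) '' A) := by
  set m := sInf ((fun w => ⟪g, w⟫) '' A)
  have hupper : ∀ w ∈ A, ⟪g, w⟫ ≤ -m := fun w hw => by
    have := hA.sInf_inner_le g (hsym w hw)
    rw [inner_neg_right] at this
    linarith
  obtain ⟨w, hw⟩ := hne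
  have hm : 0 ≤ -m := by linarith [hA.sInf_inner_le g hw, hupper w hw]
  have hfirst := hf.add_inner_le_of_hasGradientAt hx hy hg
  have hdual : ⟪g, x - y⟫ ≤ gauge (convexHull ℝ A) (x - y) * -m :=
    (innerₗ H g).apply_le_gauge_convexHull_mul hm hupper habs
  have hneg : ⟪g, y - x⟫ = -⟪g, x - y⟫ := by rw [← inner_neg_right, neg_sub]
  nlinarith [mul_le_mul_of_nonneg_right hR hm]

section

variable {H : Type*} [NormedAddCommGroup H] [InnerProductSpace ℝ H]

def IsSmoothWrtGauge (K : Set H) (S : Submodule ℝ H) (f : H → ℝ) (f' : H → H) (L : ℝ) :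
    Prop :=
  ∀ x ∈ S, ∀ z ∈ S, gauge K z = 1 → ∀ γ : ℝ, 0 < γ →
    f (x + γ • z) ≤ f x + γ * ⟪f' x, z⟫ + L / 2 * γ ^ 2

namespace IsSmoothWrtGauge

variable {K : Set H} {S : Submodule ℝ H} {f : H → ℝ} {f' : H → H} {L : ℝ} {x z : H}

theorem le_of_gauge_le_one (hs : IsSmoothWrtGauge K S f f' L)
    (hpos : ∀ z ∈ S, z ≠ 0 → 0 < gauge K z) (hL : 0 ≤ L) (hx : x ∈ S) (hz : z ∈ S)
    (hz1 : gauge K z ≤ 1) {γ : ℝ} (hγ : 0 ≤ γ) :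
    f (x + γ • z) ≤ f x + γ * ⟪f' x, z⟫ + L / 2 * γ ^ 2 := by
  rcases eq_or_ne z 0 with rfl | hz0
  · simp only [smul_zero, add_zero, inner_zero_right, mul_zero]
    exact le_add_of_nonneg_right (by positivity)
  rcases hγ.eq_or_lt with rfl | hγ
  · simp
  set a := gauge K z
  have ha : 0 < a := hpos z hz hz0
  have hunit : gauge K (a⁻¹ • z) = 1 := by
    rw [gauge_smul_of_nonneg (inv_nonneg.2 ha.le), smul_eq_mul, inv_mul_cancel₀ ha.ne']
  have h := hs x hx (a⁻¹ • z) (S.smul_mem _ hz) hunit (γ * a) (mul_pos hγ ha)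
  rw [smul_smul, mul_assoc, mul_inv_cancel₀ ha.ne', mul_one, real_inner_smul_right,
    ← mul_assoc, mul_assoc γ, mul_inv_cancel₀ ha.ne', mul_one] at h
  have ha2 : a ^ 2 ≤ 1 := pow_le_one₀ ha.le hz1
  nlinarith [mul_le_mul_of_nonneg_left ha2 (by positivity : 0 ≤ L / 2 * γ ^ 2)]

theorem apply_sub_le (hs : IsSmoothWrtGauge K S f f' L)
    (hpos : ∀ z ∈ S, z ≠ 0 → 0 < gauge K z) (hL : 0 < L) (hx : x ∈ S) (hz : z ∈ S)
    (hz1 : gauge K z ≤ 1) (hneg : ⟪f' x, z⟫ ≤ 0) :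
    f (x - (⟪f' x, z⟫ / L) • z) ≤ f x - ⟪f' x, z⟫ ^ 2 / (2 * L) := by
  have h := hs.le_of_gauge_le_one hpos hL.le hx hz hz1
    (γ := -(⟪f' x, z⟫ / L)) (neg_nonneg.2 (div_nonpos_of_nonpos_of_nonneg hneg hL.le))
  rw [neg_smul, ← sub_eq_add_neg] at h
  convert h using 1
  field_simp
  ring

end IsSmoothWrtGauge

end

theorem le_div_of_sq_le_mul_sub {C : ℝ} (hC : 0 ≤ C) {h : ℕ → ℝ} (hh : ∀ s, 0 ≤ h s)
    (hrec : ∀ s, h s ^ 2 ≤ C * (h s - h (s + 1))) (s : ℕ) :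
    h (s + 1) ≤ C / (s + 2) := by
  rcases hC.eq_or_lt with rfl | hC
  · have := hrec (s + 1)
    simp only [zero_mul, zero_div] at this ⊢
    nlinarith [hh (s + 1)]
  rw [le_div_iff₀ (by positivity)]
  induction s with
  | zero =>
    norm_num
    nlinarith [hrec 0, hh 1, sq_nonneg (h 0 - C / 2)]
  | succ n ih =>
    push_cast
    have hn : (0 : ℝ) ≤ n := n.cast_nonneg
    nlinarith [hrec (n + 1), hh (n + 1), hh (n + 2), sq_nonneg (C - h (n + 1) * (n + 2)),
      mul_nonneg (mul_nonneg (hh (n + 1)) (sub_nonneg.2 ih)) (by linarith : (0 : ℝ) ≤ n + 1)]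

theorem sq_le_mul_sub_of_mul_le_mul_neg {δ L R d d' g : ℝ} (hδ : 0 < δ) (hL : 0 < L)
    (hd : 0 ≤ d) (hgap : δ * d ≤ R * -g) (hdescent : d' ≤ d - g ^ 2 / (2 * L)) :
    d ^ 2 ≤ 2 * L * R ^ 2 / δ ^ 2 * (d - d') :=
  calc d ^ 2 = (δ * d) ^ 2 / δ ^ 2 := by field_simp
    _ ≤ (R * -g) ^ 2 / δ ^ 2 := by gcongr ?_ ^ 2 / _
    _ = 2 * L * R ^ 2 / δ ^ 2 * (g ^ 2 / (2 * L)) := by field_simp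
    _ ≤ 2 * L * R ^ 2 / δ ^ 2 * (d - d') := by
      gcongr
      linarith

theorem stmt_1_general {H : Type*} [NormedAddCommGroup H] [InnerProductSpace ℝ H] [CompleteSpace H]
    (A : Set H) (hA : IsCompact A) (hsym : ∀ z ∈ A, -z ∈ A)
    (f : H → ℝ) (f' : H → H) (hgrad : ∀ x, HasGradientAt f (f' x) x)
    (hconv : ConvexOn ℝ univ f)
    (habs : ∀ x ∈ span ℝ A, ∃ c : ℝ, 0 < c ∧ x ∈ c • convexHull ℝ A)
    (hpos : ∀ x ∈ span ℝ A, x ≠ 0 → 0 < gauge (convexHull ℝ A) x)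
    (δ LA : ℝ) (hδ0 : 0 < δ) (hLA : 0 < LA)
    (hsmooth : ∀ x ∈ span ℝ A, ∀ z ∈ span ℝ A, gauge (convexHull ℝ A) z = 1 →
      ∀ γ : ℝ, 0 < γ → f (x + γ • z) ≤ f x + γ * ⟪f' x, z⟫ + LA / 2 * γ ^ 2)
    (xs : H) (hxs : xs ∈ span ℝ A) (hmin : ∀ y ∈ span ℝ A, f xs ≤ f y)
    (R : ℝ)
    (x z : ℕ → H)
    (hx0 : x 0 ∈ span ℝ A)
    (hlevel : ∀ y ∈ span ℝ A, f y ≤ f (x 0) → gauge (convexHull ℝ A) (y - xs) ≤ R)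
    (hzA : ∀ t, z t ∈ A)
    (hlmo : ∀ t, ⟪f' (x t), z t⟫ ≤ δ * sInf ((fun w => ⟪f' (x t), w⟫) '' A))
    (hupd : ∀ t, x (t + 1) = x t - (⟪f' (x t), z t⟫ / LA) • z t) :
    ∀ t : ℕ, f (x (t + 1)) - f xs ≤ 2 * LA * R ^ 2 / (δ ^ 2 * ((t : ℝ) + 2)) := by
  have hxA : ∀ t, x t ∈ span ℝ A := fun t => by
    induction t with
    | zero => exact hx0
    | succ n ih => rw [hupd n]; exact sub_mem ih (smul_mem _ _ (subset_span (hzA n)))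
  have hinner : ∀ t, ⟪f' (x t), z t⟫ ≤ 0 := fun t => by
    have hm := hA.sInf_inner_le (f' (x t)) (hsym _ (hzA t))
    rw [inner_neg_right] at hm
    nlinarith [hlmo t, mul_le_mul_of_nonneg_left hm hδ0.le]
  have hdescent : ∀ t, f (x (t + 1)) ≤ f (x t) - ⟪f' (x t), z t⟫ ^ 2 / (2 * LA) := fun t => by
    rw [hupd t]
    exact IsSmoothWrtGauge.apply_sub_le hsmooth hpos hLA (hxA t) (subset_span (hzA t))
      (gauge_le_one_of_mem (subset_convexHull ℝ A (hzA t))) (hinner t)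
  have hfx0 : ∀ t, f (x t) ≤ f (x 0) := fun t =>
    antitone_nat_of_succ_le (f := fun t => f (x t))
      (fun t => (hdescent t).trans (sub_le_self _ (by positivity))) t.zero_le
  have hR : 0 ≤ R := (gauge_nonneg _).trans (hlevel _ hx0 le_rfl)
  have hgap : ∀ t, δ * (f (x t) - f xs) ≤ R * -⟪f' (x t), z t⟫ := fun t => by
    have h := hconv.sub_le_mul_neg_sInf_inner (mem_univ _) (mem_univ _) (hgrad (x t)) hA hsym
      ⟨z 0, hzA 0⟩ (habs _ (sub_mem (hxA t) hxs)) (hlevel _ (hxA t) (hfx0 t))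
    linarith [mul_le_mul_of_nonneg_left h hδ0.le, mul_le_mul_of_nonneg_left (hlmo t) hR]
  have hgap0 : ∀ t, 0 ≤ f (x t) - f xs := fun t => sub_nonneg.2 (hmin _ (hxA t))
  intro t
  have h := le_div_of_sq_le_mul_sub (by positivity) hgap0
    (fun t => sq_le_mul_sub_of_mul_le_mul_neg hδ0 hLA (hgap0 t) (hgap t)
      (by linarith [hdescent t])) t
  rwa [div_div] at h

/-- Theorem 2 of the paper: sublinear rate of affine invariant
generalized matching pursuit with a `δ`-approximate LMO, for `f` convex and
`L_A`-smooth w.r.t. the atomic norm (the gauge of `convexHull ℝ A`) on `lin(A)`. -/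
theorem stmt_1 {H : Type*} [NormedAddCommGroup H] [InnerProductSpace ℝ H] [CompleteSpace H]
    (A : Set H) (hA : IsCompact A) (hsym : ∀ z ∈ A, -z ∈ A)
    (f : H → ℝ) (f' : H → H) (hgrad : ∀ x, HasGradientAt f (f' x) x)
    (hconv : ConvexOn ℝ univ f)
    (habs : ∀ x ∈ span ℝ A, ∃ c : ℝ, 0 < c ∧ x ∈ c • convexHull ℝ A)
    (hpos : ∀ x ∈ span ℝ A, x ≠ 0 → 0 < gauge (convexHull ℝ A) x)
    (δ LA : ℝ) (hδ0 : 0 < δ) (hδ1 : δ ≤ 1) (hLA : 0 < LA)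
    (hsmooth : ∀ x ∈ span ℝ A, ∀ z ∈ span ℝ A, gauge (convexHull ℝ A) z = 1 →
      ∀ γ : ℝ, 0 < γ → f (x + γ • z) ≤ f x + γ * ⟪f' x, z⟫ + LA / 2 * γ ^ 2)
    (xs : H) (hxs : xs ∈ span ℝ A) (hmin : ∀ y ∈ span ℝ A, f xs ≤ f y)
    (R : ℝ) (hR0 : 0 ≤ R)
    (x z : ℕ → H)
    (hx0 : x 0 ∈ span ℝ A)
    (hlevel : ∀ y ∈ span ℝ A, f y ≤ f (x 0) → gauge (convexHull ℝ A) (y - xs) ≤ R)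
    (hzA : ∀ t, z t ∈ A)
    (hlmo : ∀ t, ⟪f' (x t), z t⟫ ≤ δ * sInf ((fun w => ⟪f' (x t), w⟫) '' A))
    (hupd : ∀ t, x (t + 1) = x t - (⟪f' (x t), z t⟫ / LA) • z t) :
    ∀ t : ℕ, f (x (t + 1)) - f xs ≤ 2 * LA * R ^ 2 / (δ ^ 2 * ((t : ℝ) + 2)) :=
  stmt_1_general A hA hsym f f' hgrad hconv habs hpos δ LA hδ0 hLA hsmooth xs hxs hmin R x z hx0
    hlevel hzA hlmo hupd
end

section
/- Let δ ∈ (0,1], L_A > 0 and μ_A > 0, and assume f is L_A-smooth and μ_A-strongly convex with respect to the atomic norm on lin(A). Let x⋆ ∈ lin(A) be a minimizer of f over lin(A). Starting from x₀ ∈ lin(A), define iterates by choosing z_t ∈ A with ⟨∇f(x_t), z_t⟩ ≤ δ · min_{z∈A} ⟨∇f(x_t), z⟩ and setting x_{t+1} = x_t − (⟨∇f(x_t), z_t⟩/L_A)·z_t. Then, writing ε_t := f(x_t) − f(x⋆), for every t ≥ 0: ε_{t+1} ≤ (1 − δ²·μ_A/L_A)·ε_t. -/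
/-!
Smoothness along the normalized atom `z_t / ‖z_t‖_A` makes the step decrease `f` by at least
`⟪∇f(x_t), z_t⟫² / (2 L_A)`. Since `A` is symmetric, `m_t := min_{z ∈ A} ⟪∇f(x_t), z⟫ ≤ 0` and
`⟪∇f(x_t), y⟫ ≥ m_t ‖y‖_A` on `lin(A)`, so strong convexity gives `ε_t ≤ m_t² / (2 μ_A)`.
The approximate oracle guarantees `⟪∇f(x_t), z_t⟫² ≥ δ² m_t²`, and combining the three bounds
gives the rate.
-/

open Submodule Set Pointwise RealInnerProductSpace

theorem LinearMap.apply_le_mul_gauge {E : Type*} [AddCommGroup E] [Module ℝ E] {s : Set E}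
    (ℓ : E →ₗ[ℝ] ℝ) {M : ℝ} (hM : 0 ≤ M) (hℓ : ∀ u ∈ s, ℓ u ≤ M) {y : E}
    (hy : ∃ c : ℝ, 0 < c ∧ y ∈ c • s) : ℓ y ≤ M * gauge s y := by
  rw [gauge_def, ← smul_eq_mul, ← Real.sInf_smul_of_nonneg hM]
  obtain ⟨c, hc, hyc⟩ := hy
  refine le_csInf (Set.Nonempty.image _ ⟨c, hc, hyc⟩) ?_
  rintro _ ⟨r, ⟨hr, u, hu, rfl⟩, rfl⟩
  show ℓ (r • u) ≤ M * r
  rw [map_smul, smul_eq_mul, mul_comm M]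
  exact mul_le_mul_of_nonneg_left (hℓ u hu) (le_of_lt hr)

theorem LinearMap.apply_le_of_mem_convexHull {E : Type*} [AddCommGroup E] [Module ℝ E]
    {s : Set E} (ℓ : E →ₗ[ℝ] ℝ) {M : ℝ} (hℓ : ∀ u ∈ s, ℓ u ≤ M) :
    ∀ u ∈ convexHull ℝ s, ℓ u ≤ M :=
  fun _ hu => convexHull_min hℓ (convex_halfSpace_le ℓ.isLinear M) hu

section

variable {E : Type*} [NormedAddCommGroup E] [InnerProductSpace ℝ E]

theorem IsCompact.sInf_inner_image_le {A : Set E} (hA : IsCompact A) (g : E) {w : E}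
    (hw : w ∈ A) : sInf ((fun w => ⟪g, w⟫) '' A) ≤ ⟪g, w⟫ :=
  csInf_le (hA.image (continuous_const.inner continuous_id)).bddBelow ⟨w, hw, rfl⟩

theorem IsCompact.sInf_inner_image_nonpos {A : Set E} (hA : IsCompact A)
    (hsym : ∀ z ∈ A, -z ∈ A) (g : E) {w : E} (hw : w ∈ A) :
    sInf ((fun w => ⟪g, w⟫) '' A) ≤ 0 := by
  have h := hA.sInf_inner_image_le g hw
  have hneg := hA.sInf_inner_image_le g (hsym w hw)
  rw [inner_neg_right] at hneg
  linarith

theorem mul_sInf_inner_le_inner {A : Set E} (hA : IsCompact A) (hsym : ∀ z ∈ A, -z ∈ A)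
    (g : E) {w y : E} (hw : w ∈ A) (hy : ∃ c : ℝ, 0 < c ∧ y ∈ c • convexHull ℝ A) :
    gauge (convexHull ℝ A) y * sInf ((fun w => ⟪g, w⟫) '' A) ≤ ⟪g, y⟫ := by
  set m := sInf ((fun w => ⟪g, w⟫) '' A)
  have hbound : ∀ u ∈ A, -(innerₛₗ ℝ g) u ≤ -m := fun u hu => by
    simpa using hA.sInf_inner_image_le g hu
  have h := (-(innerₛₗ ℝ g)).apply_le_mul_gauge
    (neg_nonneg.mpr (hA.sInf_inner_image_nonpos hsym g hw))
    ((-(innerₛₗ ℝ g)).apply_le_of_mem_convexHull hbound) hy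
  simp only [LinearMap.neg_apply, innerₛₗ_apply_apply] at h
  linarith

theorem le_sub_sq_div_of_smooth {S : Set E} {V : Submodule ℝ E} {f : E → ℝ} {g x z : E}
    {L : ℝ} (hL : 0 < L)
    (hsmooth : ∀ z ∈ V, gauge S z = 1 →
      ∀ γ : ℝ, 0 < γ → f (x + γ • z) ≤ f x + γ * ⟪g, z⟫ + L / 2 * γ ^ 2)
    (hzV : z ∈ V) (hpos : z ≠ 0 → 0 < gauge S z) (hz1 : gauge S z ≤ 1) (hgz : ⟪g, z⟫ ≤ 0) :
    f (x - (⟪g, z⟫ / L) • z) ≤ f x - ⟪g, z⟫ ^ 2 / (2 * L) := by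
  set c := ⟪g, z⟫ with hc
  rcases hgz.eq_or_lt with hc0 | hc0
  · simp [hc0]
  have ha0 : 0 < gauge S z := hpos fun h => by simp [hc, h] at hc0
  set a := gauge S z
  have hunit : gauge S (a⁻¹ • z) = 1 := by
    rw [gauge_smul_of_nonneg (inv_nonneg.mpr ha0.le), smul_eq_mul, inv_mul_cancel₀ ha0.ne']
  have hγ : 0 < -c / L * a := mul_pos (div_pos (neg_pos.mpr hc0) hL) ha0
  have h := hsmooth (a⁻¹ • z) (V.smul_mem _ hzV) hunit _ hγ
  have hstep : x + (-c / L * a) • a⁻¹ • z = x - (c / L) • z := by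
    rw [smul_smul, mul_assoc, mul_inv_cancel₀ ha0.ne', mul_one, neg_div, neg_smul,
      sub_eq_add_neg]
  rw [hstep, real_inner_smul_right, ← hc] at h
  have hval : -c / L * a * (a⁻¹ * c) + L / 2 * (-c / L * a) ^ 2
      = -(c ^ 2 / (2 * L)) - c ^ 2 / (2 * L) * (1 - a ^ 2) := by
    field_simp
    ring
  have ha2 : 0 ≤ c ^ 2 / (2 * L) * (1 - a ^ 2) :=
    mul_nonneg (by positivity) (sub_nonneg.mpr (pow_le_one₀ ha0.le hz1))
  linarith

theorem sub_le_sq_div_of_strongConvex {S : Set E} {f : E → ℝ} {g x y : E} {μ m : ℝ}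
    (hμ : 0 < μ)
    (hstrong : f x + ⟪g, y - x⟫ + μ / 2 * gauge S (y - x) ^ 2 ≤ f y)
    (hdual : gauge S (y - x) * m ≤ ⟪g, y - x⟫) :
    f x - f y ≤ m ^ 2 / (2 * μ) := by
  rw [le_div_iff₀ (by positivity)]
  nlinarith [sq_nonneg (μ * gauge S (y - x) + m)]

end

theorem le_one_sub_mul_of_sufficient_decrease {ε ε' c m δ L μ : ℝ} (hL : 0 < L) (hμ : 0 < μ)
    (hδ : 0 ≤ δ) (hm : m ≤ 0) (hc : c ≤ δ * m) (hdecrease : ε' ≤ ε - c ^ 2 / (2 * L))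
    (hgap : ε ≤ m ^ 2 / (2 * μ)) :
    ε' ≤ (1 - δ ^ 2 * μ / L) * ε := by
  have hδm : δ * m ≤ 0 := mul_nonpos_of_nonneg_of_nonpos hδ hm
  have hsq : δ ^ 2 * m ^ 2 ≤ c ^ 2 := by nlinarith
  have h1 : δ ^ 2 * μ / L * ε ≤ δ ^ 2 * μ / L * (m ^ 2 / (2 * μ)) :=
    mul_le_mul_of_nonneg_left hgap (by positivity)
  have h2 : δ ^ 2 * μ / L * (m ^ 2 / (2 * μ)) = δ ^ 2 * m ^ 2 / (2 * L) := by
    field_simp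
  have h3 : δ ^ 2 * m ^ 2 / (2 * L) ≤ c ^ 2 / (2 * L) := by gcongr
  linarith

theorem stmt_3_general {H : Type*} [NormedAddCommGroup H] [InnerProductSpace ℝ H]
    (A : Set H) (hA : IsCompact A) (hsym : ∀ z ∈ A, -z ∈ A)
    (f : H → ℝ) (f' : H → H)
    (habs : ∀ x ∈ span ℝ A, ∃ c : ℝ, 0 < c ∧ x ∈ c • convexHull ℝ A)
    (hpos : ∀ x ∈ span ℝ A, x ≠ 0 → 0 < gauge (convexHull ℝ A) x)
    (δ LA μA : ℝ) (hδ0 : 0 < δ) (hLA : 0 < LA) (hμA : 0 < μA)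
    (hsmooth : ∀ x ∈ span ℝ A, ∀ z ∈ span ℝ A, gauge (convexHull ℝ A) z = 1 →
      ∀ γ : ℝ, 0 < γ → f (x + γ • z) ≤ f x + γ * ⟪f' x, z⟫ + LA / 2 * γ ^ 2)
    (hstrong : ∀ x ∈ span ℝ A, ∀ y ∈ span ℝ A,
      f x + ⟪f' x, y - x⟫ + μA / 2 * gauge (convexHull ℝ A) (y - x) ^ 2 ≤ f y)
    (xs : H) (hxs : xs ∈ span ℝ A)
    (x z : ℕ → H)
    (hx0 : x 0 ∈ span ℝ A)
    (hzA : ∀ t, z t ∈ A)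
    (hlmo : ∀ t, ⟪f' (x t), z t⟫ ≤ δ * sInf ((fun w => ⟪f' (x t), w⟫) '' A))
    (hupd : ∀ t, x (t + 1) = x t - (⟪f' (x t), z t⟫ / LA) • z t) :
    ∀ t : ℕ, f (x (t + 1)) - f xs ≤ (1 - δ ^ 2 * μA / LA) * (f (x t) - f xs) := by
  have hx : ∀ t, x t ∈ span ℝ A := by
    intro t
    induction t with
    | zero => exact hx0
    | succ t ih => rw [hupd t]; exact sub_mem ih (smul_mem _ _ (subset_span (hzA t)))
  intro t
  have hm0 := hA.sInf_inner_image_nonpos hsym (f' (x t)) (hzA t)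
  have hdecrease : f (x (t + 1)) ≤ f (x t) - ⟪f' (x t), z t⟫ ^ 2 / (2 * LA) := by
    rw [hupd t]
    exact le_sub_sq_div_of_smooth hLA (hsmooth (x t) (hx t)) (subset_span (hzA t))
      (hpos _ (subset_span (hzA t))) (gauge_le_one_of_mem (subset_convexHull ℝ A (hzA t)))
      ((hlmo t).trans (mul_nonpos_of_nonneg_of_nonpos hδ0.le hm0))
  have hdual := mul_sInf_inner_le_inner hA hsym (f' (x t)) (hzA t)
    (habs _ (sub_mem hxs (hx t)))
  have hgap := sub_le_sq_div_of_strongConvex hμA (hstrong (x t) (hx t) xs hxs) hdual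
  exact le_one_sub_mul_of_sufficient_decrease hLA hμA hδ0.le hm0 (hlmo t) (by linarith) hgap

/-- Theorem 5, Part 1: linear rate of affine invariant generalized
matching pursuit with a `δ`-approximate LMO for `f` that is `L_A`-smooth and
`μ_A`-strongly convex w.r.t. the atomic norm on `lin(A)`. -/
theorem stmt_3 {H : Type*} [NormedAddCommGroup H] [InnerProductSpace ℝ H] [CompleteSpace H]
    (A : Set H) (hA : IsCompact A) (hsym : ∀ z ∈ A, -z ∈ A)
    (f : H → ℝ) (f' : H → H) (hgrad : ∀ x, HasGradientAt f (f' x) x)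
    (hconv : ConvexOn ℝ univ f)
    (habs : ∀ x ∈ span ℝ A, ∃ c : ℝ, 0 < c ∧ x ∈ c • convexHull ℝ A)
    (hpos : ∀ x ∈ span ℝ A, x ≠ 0 → 0 < gauge (convexHull ℝ A) x)
    (δ LA μA : ℝ) (hδ0 : 0 < δ) (hδ1 : δ ≤ 1) (hLA : 0 < LA) (hμA : 0 < μA)
    (hsmooth : ∀ x ∈ span ℝ A, ∀ z ∈ span ℝ A, gauge (convexHull ℝ A) z = 1 →
      ∀ γ : ℝ, 0 < γ → f (x + γ • z) ≤ f x + γ * ⟪f' x, z⟫ + LA / 2 * γ ^ 2)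
    (hstrong : ∀ x ∈ span ℝ A, ∀ y ∈ span ℝ A,
      f x + ⟪f' x, y - x⟫ + μA / 2 * gauge (convexHull ℝ A) (y - x) ^ 2 ≤ f y)
    (xs : H) (hxs : xs ∈ span ℝ A) (hmin : ∀ y ∈ span ℝ A, f xs ≤ f y)
    (x z : ℕ → H)
    (hx0 : x 0 ∈ span ℝ A)
    (hzA : ∀ t, z t ∈ A)
    (hlmo : ∀ t, ⟪f' (x t), z t⟫ ≤ δ * sInf ((fun w => ⟪f' (x t), w⟫) '' A))
    (hupd : ∀ t, x (t + 1) = x t - (⟪f' (x t), z t⟫ / LA) • z t) :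
    ∀ t : ℕ, f (x (t + 1)) - f xs ≤ (1 - δ ^ 2 * μA / LA) * (f (x t) - f xs) :=
  stmt_3_general A hA hsym f f' habs hpos δ LA μA hδ0 hLA hμA hsmooth hstrong xs hxs x z hx0 hzA
    hlmo hupd
end

section
/- Let L_A > 0 and μ_A > 0, and assume f is L_A-smooth and μ_A-strongly convex with respect to the atomic norm on lin(A). Let Z be a Borel probability measure on H supported in A, and let δ̂ ∈ (0,1] satisfy ∫ ⟨d, z⟩² dZ(z) ≥ δ̂² · (sup_{z∈A} ⟨d, z⟩)² for every d in the closed linear span of A. Let x⋆ ∈ lin(A) be a minimizer of f over lin(A). Then for every x ∈ lin(A), with z a random vector of law Z and x⁺ := x − (⟨∇f(x), z⟩/L_A)·z, one has E[f(x⁺)] − f(x⋆) ≤ (1 − δ̂²·μ_A/L_A)·(f(x) − f(x⋆)). -/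
open Submodule Set Pointwise RealInnerProductSpace MeasureTheory

/-!
Smoothness along atom-norm unit directions, together with `‖z‖_A ≤ 1` for atoms, makes the
step `x⁺ = x - (⟪∇f x, z⟫ / L) z` decrease `f` by at least `⟪∇f x, z⟫² / (2L)`; averaging over
`z ∼ Z` and using the sampling quality `δ̂` bounds the expected decrease from below by
`δ̂² (sup_{z ∈ A} ⟪∇f x, z⟫)² / (2L)`. The supremum is the dual atomic norm of the gradient,
and strong convexity gives the Polyak–Łojasiewicz inequality
`2 μ (f x - f x⋆) ≤ (sup_{z ∈ A} ⟪∇f x, z⟫)²`.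
The sampling condition only concerns directions in the closed span of `A`, so it is applied to
the orthogonal projection of the gradient onto that span, which has the same inner products with
the atoms.
-/

section Gauge

variable {E : Type*} [AddCommGroup E] [Module ℝ E]

lemma neg_mem_convexHull_of_forall_neg_mem {A : Set E} (hsym : ∀ z ∈ A, -z ∈ A) {w : E}
    (hw : w ∈ convexHull ℝ A) : -w ∈ convexHull ℝ A := by
  have hw' : -w ∈ convexHull ℝ (-A) := by rw [convexHull_neg]; exact neg_mem_neg.2 hw
  exact convexHull_mono (fun z hz => by simpa using hsym (-z) hz) hw'

lemma gauge_smul_eq_abs_mul {s : Set E} (hsym : ∀ x ∈ s, -x ∈ s) (c : ℝ) (x : E) :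
    gauge s (c • x) = |c| * gauge s x := by
  rcases le_total 0 c with hc | hc
  · rw [gauge_smul_of_nonneg hc, abs_of_nonneg hc, smul_eq_mul]
  · rw [show c • x = -((-c) • x) by simp, gauge_neg hsym, gauge_smul_of_nonneg (neg_nonneg.2 hc),
      abs_of_nonpos hc, smul_eq_mul]

lemma apply_le_gauge_mul {s : Set E} (φ : E →ₗ[ℝ] ℝ) {S : ℝ} (hS0 : 0 ≤ S)
    (hS : ∀ w ∈ s, φ w ≤ S) {u : E} (hu : ∃ c : ℝ, 0 < c ∧ u ∈ c • s) :
    φ u ≤ gauge s u * S := by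
  have hle : ∀ r : ℝ, 0 < r → u ∈ r • s → φ u ≤ r * S := by
    rintro r hr ⟨v, hv, rfl⟩
    rw [map_smul, smul_eq_mul]
    exact mul_le_mul_of_nonneg_left (hS v hv) hr.le
  obtain ⟨c, hc, hcu⟩ := hu
  rcases hS0.eq_or_lt with rfl | hS0
  · simpa using hle c hc hcu
  · rw [← div_le_iff₀ hS0, gauge_def]
    exact le_csInf ⟨c, hc, hcu⟩ fun r ⟨hr, hru⟩ => (div_le_iff₀ hS0).2 (hle r hr hru)

lemma convexHull_subset_setOf_le_sSup (φ : E →ₗ[ℝ] ℝ) {A : Set E} (hbdd : BddAbove (φ '' A)) :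
    convexHull ℝ A ⊆ {w | φ w ≤ sSup (φ '' A)} :=
  convexHull_min (fun _ hw => le_csSup hbdd (mem_image_of_mem φ hw))
    (convex_halfSpace_le φ.isLinear _)

lemma sSup_image_nonneg_of_forall_neg_mem (φ : E →ₗ[ℝ] ℝ) {A : Set E}
    (hsym : ∀ z ∈ A, -z ∈ A) (hbdd : BddAbove (φ '' A)) : 0 ≤ sSup (φ '' A) := by
  rcases A.eq_empty_or_nonempty with rfl | ⟨z, hz⟩
  · simp
  · have h₁ := le_csSup hbdd (mem_image_of_mem φ hz)
    have h₂ := le_csSup hbdd (mem_image_of_mem φ (hsym z hz))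
    rw [map_neg] at h₂
    linarith

end Gauge

lemma Continuous.integrable_of_ae_mem_isCompact {X F : Type*} [TopologicalSpace X] [T2Space X]
    [MeasurableSpace X] [OpensMeasurableSpace X] [NormedAddCommGroup F] {μ : Measure X}
    [IsFiniteMeasure μ] {K : Set X} {φ : X → F} (hφ : Continuous φ) (hK : IsCompact K)
    (hμK : ∀ᵐ x ∂μ, x ∈ K) : Integrable φ μ := by
  rw [← Measure.restrict_eq_self_of_ae_mem hμK]
  exact hφ.continuousOn.integrableOn_compact hK

section AtomicNorm

variable {H : Type*} [NormedAddCommGroup H] [InnerProductSpace ℝ H]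

noncomputable def pursuitStep (L : ℝ) (g x z : H) : H := x - (⟪g, z⟫ / L) • z

lemma le_add_inner_add_gauge_sq {V : Submodule ℝ H} {s : Set H} {f : H → ℝ} {g x : H} {L : ℝ}
    (hpos : ∀ w ∈ V, w ≠ 0 → 0 < gauge s w)
    (hsmooth : ∀ z ∈ V, gauge s z = 1 → ∀ γ : ℝ, 0 < γ →
      f (x + γ • z) ≤ f x + γ * ⟪g, z⟫ + L / 2 * γ ^ 2)
    {w : H} (hw : w ∈ V) : f (x + w) ≤ f x + ⟪g, w⟫ + L / 2 * gauge s w ^ 2 := by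
  rcases eq_or_ne w 0 with rfl | hw0
  · simp
  have ht := hpos w hw hw0
  have hunit : gauge s ((gauge s w)⁻¹ • w) = 1 := by
    rw [gauge_smul_of_nonneg (inv_nonneg.2 ht.le), smul_eq_mul, inv_mul_cancel₀ ht.ne']
  have := hsmooth _ (V.smul_mem _ hw) hunit _ ht
  rwa [smul_inv_smul₀ ht.ne', real_inner_smul_right, mul_inv_cancel_left₀ ht.ne'] at this

variable {A : Set H}

lemma apply_pursuitStep_le {f : H → ℝ} {g x : H} {L : ℝ} (hL : 0 < L)
    (hsym : ∀ z ∈ A, -z ∈ A)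
    (hpos : ∀ w ∈ span ℝ A, w ≠ 0 → 0 < gauge (convexHull ℝ A) w)
    (hsmooth : ∀ z ∈ span ℝ A, gauge (convexHull ℝ A) z = 1 → ∀ γ : ℝ, 0 < γ →
      f (x + γ • z) ≤ f x + γ * ⟪g, z⟫ + L / 2 * γ ^ 2)
    {z : H} (hz : z ∈ A) : f (pursuitStep L g x z) ≤ f x - ⟪g, z⟫ ^ 2 / (2 * L) := by
  set c := ⟪g, z⟫ / L
  have hgauge : gauge (convexHull ℝ A) ((-c) • z) ^ 2 ≤ c ^ 2 := by
    rw [gauge_smul_eq_abs_mul (fun _ => neg_mem_convexHull_of_forall_neg_mem hsym), abs_neg,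
      ← sq_abs c]
    exact pow_le_pow_left₀ (mul_nonneg (abs_nonneg c) (gauge_nonneg _))
      (mul_le_of_le_one_right (abs_nonneg c) (gauge_le_one_of_mem (subset_convexHull ℝ A hz))) 2
  calc f (pursuitStep L g x z) = f (x + (-c) • z) := by rw [pursuitStep, neg_smul, sub_eq_add_neg]
    _ ≤ f x + ⟪g, (-c) • z⟫ + L / 2 * gauge (convexHull ℝ A) ((-c) • z) ^ 2 :=
      le_add_inner_add_gauge_sq hpos hsmooth ((span ℝ A).smul_mem _ (subset_span hz))
    _ ≤ f x + -c * ⟪g, z⟫ + L / 2 * c ^ 2 := by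
      rw [real_inner_smul_right]; gcongr
    _ = f x - ⟪g, z⟫ ^ 2 / (2 * L) := by simp only [c]; field_simp; ring

lemma integral_apply_pursuitStep_le [MeasurableSpace H] [BorelSpace H] {Z : Measure H}
    [IsProbabilityMeasure Z] (hA : IsCompact A) (hZA : ∀ᵐ z ∂Z, z ∈ A) {f : H → ℝ}
    (hf : Continuous f) {g x : H} {L : ℝ}
    (hstep : ∀ z ∈ A, f (pursuitStep L g x z) ≤ f x - ⟪g, z⟫ ^ 2 / (2 * L)) :
    ∫ z, f (pursuitStep L g x z) ∂Z ≤ f x - (∫ z, ⟪g, z⟫ ^ 2 ∂Z) / (2 * L) := by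
  have hinner : Continuous fun z : H => ⟪g, z⟫ := continuous_const.inner continuous_id
  have hsq : Integrable (fun z : H => ⟪g, z⟫ ^ 2) Z :=
    (hinner.pow 2).integrable_of_ae_mem_isCompact hA hZA
  have hf_step : Integrable (fun z => f (pursuitStep L g x z)) Z :=
    Continuous.integrable_of_ae_mem_isCompact
      (hf.comp (continuous_const.sub ((hinner.div_const L).smul continuous_id))) hA hZA
  calc ∫ z, f (pursuitStep L g x z) ∂Z ≤ ∫ z, (f x - ⟪g, z⟫ ^ 2 / (2 * L)) ∂Z :=
        integral_mono_ae hf_step ((integrable_const _).sub (hsq.div_const _))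
          (by filter_upwards [hZA] with z hz using hstep z hz)
    _ = f x - (∫ z, ⟪g, z⟫ ^ 2 ∂Z) / (2 * L) := by
      rw [integral_sub (integrable_const _) (hsq.div_const _), integral_const, integral_div]
      simp

lemma two_mul_sub_le_sSup_inner_sq {f : H → ℝ} {g x y : H} {μ : ℝ} (hμ : 0 < μ)
    (hsym : ∀ z ∈ A, -z ∈ A) (hbdd : BddAbove ((fun w => ⟪g, w⟫) '' A))
    (habs : ∀ u ∈ span ℝ A, ∃ c : ℝ, 0 < c ∧ u ∈ c • convexHull ℝ A)
    (hx : x ∈ span ℝ A) (hy : y ∈ span ℝ A)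
    (hstrong : f x + ⟪g, y - x⟫ + μ / 2 * gauge (convexHull ℝ A) (y - x) ^ 2 ≤ f y) :
    2 * μ * (f x - f y) ≤ sSup ((fun w => ⟪g, w⟫) '' A) ^ 2 := by
  set S := sSup ((fun w => ⟪g, w⟫) '' A)
  set r := gauge (convexHull ℝ A) (y - x)
  have hS0 : 0 ≤ S := sSup_image_nonneg_of_forall_neg_mem (innerₗ H g) hsym hbdd
  have hdual : ⟪g, x - y⟫ ≤ r * S := by
    rw [show r = gauge (convexHull ℝ A) (x - y) by
      rw [← neg_sub, gauge_neg fun _ => neg_mem_convexHull_of_forall_neg_mem hsym]]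
    exact apply_le_gauge_mul (innerₗ H g) hS0
      (convexHull_subset_setOf_le_sSup (innerₗ H g) hbdd) (habs _ (sub_mem hx hy))
  rw [← neg_sub, inner_neg_right] at hstrong
  nlinarith [sq_nonneg (S - μ * r)]

lemma sq_mul_sSup_inner_sq_le_integral [CompleteSpace H] [MeasurableSpace H] {Z : Measure H}
    (hZA : ∀ᵐ z ∂Z, z ∈ A) {δ : ℝ}
    (hδ : ∀ d ∈ (span ℝ A).topologicalClosure,
      δ ^ 2 * (sSup ((fun w => ⟪d, w⟫) '' A)) ^ 2 ≤ ∫ z, ⟪d, z⟫ ^ 2 ∂Z) (g : H) :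
    δ ^ 2 * (sSup ((fun w => ⟪g, w⟫) '' A)) ^ 2 ≤ ∫ z, ⟪g, z⟫ ^ 2 ∂Z := by
  set K := (span ℝ A).topologicalClosure
  have : CompleteSpace K := (isClosed_topologicalClosure _).completeSpace_coe
  have hproj : ∀ w ∈ A, ⟪K.starProjection g, w⟫ = ⟪g, w⟫ := fun w hw => by
    rw [inner_starProjection_left_eq_right,
      starProjection_eq_self_iff.2 (le_topologicalClosure _ (subset_span hw))]
  have h := hδ _ (K.starProjection_apply_mem g)
  rwa [image_congr hproj, integral_congr_ae (by filter_upwards [hZA] with z hz; rw [hproj z hz])]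
    at h

end AtomicNorm

theorem stmt_4_general {H : Type*} [NormedAddCommGroup H] [InnerProductSpace ℝ H] [CompleteSpace H]
    [MeasurableSpace H] [BorelSpace H]
    (A : Set H) (hA : IsCompact A) (hsym : ∀ z ∈ A, -z ∈ A)
    (f : H → ℝ) (f' : H → H) (hgrad : ∀ x, HasGradientAt f (f' x) x)
    (habs : ∀ x ∈ span ℝ A, ∃ c : ℝ, 0 < c ∧ x ∈ c • convexHull ℝ A)
    (hpos : ∀ x ∈ span ℝ A, x ≠ 0 → 0 < gauge (convexHull ℝ A) x)
    (LA μA : ℝ) (hLA : 0 < LA) (hμA : 0 < μA)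
    (hsmooth : ∀ x ∈ span ℝ A, ∀ z ∈ span ℝ A, gauge (convexHull ℝ A) z = 1 →
      ∀ γ : ℝ, 0 < γ → f (x + γ • z) ≤ f x + γ * ⟪f' x, z⟫ + LA / 2 * γ ^ 2)
    (hstrong : ∀ x ∈ span ℝ A, ∀ y ∈ span ℝ A,
      f x + ⟪f' x, y - x⟫ + μA / 2 * gauge (convexHull ℝ A) (y - x) ^ 2 ≤ f y)
    (Z : Measure H) [IsProbabilityMeasure Z] (hZA : Z Aᶜ = 0)
    (δhat : ℝ)
    (hδhat : ∀ d ∈ (span ℝ A).topologicalClosure,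
      δhat ^ 2 * (sSup ((fun w => ⟪d, w⟫) '' A)) ^ 2 ≤ ∫ z, ⟪d, z⟫ ^ 2 ∂Z)
    (xs : H) (hxs : xs ∈ span ℝ A) :
    ∀ x ∈ span ℝ A,
      (∫ z, f (x - (⟪f' x, z⟫ / LA) • z) ∂Z) - f xs ≤
        (1 - δhat ^ 2 * μA / LA) * (f x - f xs) := by
  intro x hx
  change ∫ z, f (pursuitStep LA (f' x) x z) ∂Z - f xs ≤ _
  have hf : Continuous f :=
    continuous_iff_continuousAt.2 fun y => (hgrad y).hasFDerivAt.continuousAt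
  have hZA' : ∀ᵐ z ∂Z, z ∈ A := ae_iff.2 hZA
  have hbdd : BddAbove ((fun w => ⟪f' x, w⟫) '' A) :=
    (hA.image (continuous_const.inner continuous_id)).bddAbove
  have hdescent := integral_apply_pursuitStep_le hA hZA' hf fun z hz =>
    apply_pursuitStep_le hLA hsym hpos (hsmooth x hx) hz
  have hgap := two_mul_sub_le_sSup_inner_sq hμA hsym hbdd habs hx hxs (hstrong x hx xs hxs)
  have hsample := sq_mul_sSup_inner_sq_le_integral hZA' hδhat (f' x)
  have hrate : δhat ^ 2 * μA / LA * (f x - f xs) ≤ (∫ z, ⟪f' x, z⟫ ^ 2 ∂Z) / (2 * LA) := by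
    calc δhat ^ 2 * μA / LA * (f x - f xs) = δhat ^ 2 * (2 * μA * (f x - f xs)) / (2 * LA) := by
          field_simp
      _ ≤ (∫ z, ⟪f' x, z⟫ ^ 2 ∂Z) / (2 * LA) := by
          gcongr
          exact (mul_le_mul_of_nonneg_left hgap (sq_nonneg δhat)).trans hsample
  linear_combination hdescent + hrate

/-- Theorem 5, Part 2, one-step form: expected linear decrease of
random pursuit for `f` that is `L_A`-smooth and `μ_A`-strongly convex w.r.t. the
atomic norm on `lin(A)`, where the atom is sampled from a distribution `Z` on `A`
with sampling quality `δ̂`. -/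
theorem stmt_4 {H : Type*} [NormedAddCommGroup H] [InnerProductSpace ℝ H] [CompleteSpace H]
    [MeasurableSpace H] [BorelSpace H]
    (A : Set H) (hA : IsCompact A) (hsym : ∀ z ∈ A, -z ∈ A)
    (f : H → ℝ) (f' : H → H) (hgrad : ∀ x, HasGradientAt f (f' x) x)
    (hconv : ConvexOn ℝ univ f)
    (habs : ∀ x ∈ span ℝ A, ∃ c : ℝ, 0 < c ∧ x ∈ c • convexHull ℝ A)
    (hpos : ∀ x ∈ span ℝ A, x ≠ 0 → 0 < gauge (convexHull ℝ A) x)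
    (LA μA : ℝ) (hLA : 0 < LA) (hμA : 0 < μA)
    (hsmooth : ∀ x ∈ span ℝ A, ∀ z ∈ span ℝ A, gauge (convexHull ℝ A) z = 1 →
      ∀ γ : ℝ, 0 < γ → f (x + γ • z) ≤ f x + γ * ⟪f' x, z⟫ + LA / 2 * γ ^ 2)
    (hstrong : ∀ x ∈ span ℝ A, ∀ y ∈ span ℝ A,
      f x + ⟪f' x, y - x⟫ + μA / 2 * gauge (convexHull ℝ A) (y - x) ^ 2 ≤ f y)
    (Z : Measure H) [IsProbabilityMeasure Z] (hZA : Z Aᶜ = 0)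
    (δhat : ℝ) (hδ0 : 0 < δhat) (hδ1 : δhat ≤ 1)
    (hδhat : ∀ d ∈ (span ℝ A).topologicalClosure,
      δhat ^ 2 * (sSup ((fun w => ⟪d, w⟫) '' A)) ^ 2 ≤ ∫ z, ⟪d, z⟫ ^ 2 ∂Z)
    (xs : H) (hxs : xs ∈ span ℝ A) (hmin : ∀ y ∈ span ℝ A, f xs ≤ f y) :
    ∀ x ∈ span ℝ A,
      (∫ z, f (x - (⟪f' x, z⟫ / LA) • z) ∂Z) - f xs ≤
        (1 - δhat ^ 2 * μA / LA) * (f x - f xs) :=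
  stmt_4_general A hA hsym f f' hgrad habs hpos LA μA hLA hμA hsmooth hstrong Z hZA δhat hδhat xs
    hxs
end

section
/- Assume f is μ-strongly convex with respect to the Hilbert norm on lin(A), i.e. f(y) ≥ f(x) + ⟨∇f(x), y − x⟩ + (μ/2)‖y − x‖² for all x, y ∈ lin(A), with μ > 0. Let m > 0 be a lower bound on the minimal directional width of A: sup_{z∈A} ⟨d, z⟩ ≥ m·‖d‖ for every nonzero d ∈ lin(A). Then f is (m²·μ)-strongly convex with respect to the atomic norm on lin(A): f(y) ≥ f(x) + ⟨∇f(x), y − x⟩ + (m²·μ/2)‖y − x‖_A² for all x, y ∈ lin(A). -/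
/-!
It suffices that `m * gauge (convexHull A) d ≤ ‖d‖` on `span A`, i.e. that the ball of radius `m`
of `span A` lies in `convexHull A`. By continuity of the support function, the width bound holds on
the Hilbert space `W = closure (span A)`, and then Hahn–Banach with Riesz puts the closed ball of
radius `m` of `W` inside the compact set `closure (convexHull A)`. Hence `W` is finite-dimensional,
and there the interior of the closure of a convex set lies in the set itself.
-/

open Submodule Set Pointwise RealInnerProductSpace

noncomputable def supportFunction {E : Type*} [NormedAddCommGroup E] [InnerProductSpace ℝ E]
    (A : Set E) (u : E) : ℝ :=
  sSup ((fun z => ⟪u, z⟫) '' A)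

section NormedSpace

variable {E : Type*} [NormedAddCommGroup E] [NormedSpace ℝ E]

theorem FiniteDimensional.of_closedBall_subset_closure_convexHull [CompleteSpace E]
    {A : Set E} (hA : IsCompact A) {m : ℝ} (hm : 0 < m)
    (h : Metric.closedBall 0 m ⊆ closure (convexHull ℝ A)) : FiniteDimensional ℝ E :=
  have hK : IsCompact (closure (convexHull ℝ A)) :=
    (totallyBounded_convexHull.2 hA.totallyBounded).closure.isCompact_of_isClosed isClosed_closure
  FiniteDimensional.of_isCompact_closedBall₀ ℝ hm <|
    hK.of_isClosed_subset Metric.isClosed_closedBall h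

theorem Convex.interior_closure_subset [FiniteDimensional ℝ E] {s : Set E} (hs : Convex ℝ s) :
    interior (closure s) ⊆ s := by
  rcases (interior (closure s)).eq_empty_or_nonempty with h | h
  · simp [h]
  have hint : (interior s).Nonempty := by
    rw [hs.closure.interior_nonempty_iff_affineSpan_eq_top] at h
    rw [hs.interior_nonempty_iff_affineSpan_eq_top, eq_top_iff, ← h]
    exact affineSpan_le.2 <|
      (affineSpan ℝ s).closed_of_finiteDimensional.closure_subset_iff.2 (subset_affineSpan ℝ s)
  rw [hs.interior_closure_eq_interior_of_nonempty_interior hint]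
  exact interior_subset

theorem gauge_le_norm_div_of_forall_norm_lt_mem {S : Submodule ℝ E} {s : Set E} {m : ℝ}
    (hm : 0 < m) (h : ∀ x ∈ S, ‖x‖ < m → x ∈ s) {x : E} (hx : x ∈ S) :
    gauge s x ≤ ‖x‖ / m := by
  refine le_of_forall_gt_imp_ge_of_dense fun c hc => ?_
  have hc0 : 0 < c := (div_nonneg (norm_nonneg x) hm.le).trans_lt hc
  refine gauge_le_of_mem hc0.le ⟨c⁻¹ • x, h _ (S.smul_mem _ hx) ?_, smul_inv_smul₀ hc0.ne' x⟩
  rw [norm_smul, Real.norm_of_nonneg (inv_nonneg.2 hc0.le), inv_mul_lt_iff₀ hc0]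
  rwa [div_lt_iff₀ hm] at hc

end NormedSpace

section InnerProductSpace

variable {E : Type*} [NormedAddCommGroup E] [InnerProductSpace ℝ E] {A : Set E}

theorem supportFunction_le (hA : A.Nonempty) {u : E} {b : ℝ} (h : ∀ z ∈ A, ⟪u, z⟫ ≤ b) :
    supportFunction A u ≤ b :=
  csSup_le (hA.image _) (forall_mem_image.2 h)

theorem supportFunction_zero (hA : A.Nonempty) : supportFunction A 0 = 0 := by
  simp [supportFunction, hA.image_const]

theorem continuous_supportFunction (hA : IsCompact A) : Continuous (supportFunction A) :=
  hA.continuous_sSup (f := fun u z => ⟪u, z⟫) continuous_inner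

theorem supportFunction_subtype {W : Submodule ℝ E} (hAW : A ⊆ W) (u : W) :
    supportFunction ((↑) ⁻¹' A : Set W) u = supportFunction A u := by
  simp only [supportFunction, coe_inner]
  rw [← image_image (fun z => ⟪(u : E), z⟫) Subtype.val,
    image_preimage_eq_of_subset (by simpa using hAW)]

theorem closedBall_subset_closure_convexHull [CompleteSpace E] (hA : A.Nonempty) {m : ℝ}
    (h : ∀ u, m * ‖u‖ ≤ supportFunction A u) :
    Metric.closedBall 0 m ⊆ closure (convexHull ℝ A) := by
  intro w hw
  by_contra hwK
  obtain ⟨l, s, hlK, hsw⟩ :=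
    geometric_hahn_banach_closed_point (convex_convexHull ℝ A).closure isClosed_closure hwK
  set u := (InnerProductSpace.toDual ℝ E).symm l
  have hu : ∀ v, ⟪u, v⟫ = l v := fun v => InnerProductSpace.toDual_symm_apply
  have hw' : ‖w‖ ≤ m := mem_closedBall_zero_iff.1 hw
  have : m * ‖u‖ < ‖u‖ * m := calc
    m * ‖u‖ ≤ supportFunction A u := h u
    _ ≤ s := supportFunction_le hA fun z hz =>
      (hu z ▸ hlK z (subset_closure (subset_convexHull ℝ A hz))).le
    _ < ⟪u, w⟫ := hu w ▸ hsw
    _ ≤ ‖u‖ * ‖w‖ := real_inner_le_norm u w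
    _ ≤ ‖u‖ * m := by gcongr
  linarith

variable {m : ℝ}
  (hmdw : ∀ d ∈ span ℝ A, d ≠ 0 → m * ‖d‖ ≤ supportFunction A d)
include hmdw

theorem le_supportFunction_of_mem_topologicalClosure_span (hA : IsCompact A) (hne : A.Nonempty)
    {u : E} (hu : u ∈ (span ℝ A).topologicalClosure) : m * ‖u‖ ≤ supportFunction A u := by
  have hclosed : IsClosed {u : E | m * ‖u‖ ≤ supportFunction A u} :=
    isClosed_le (continuous_const.mul continuous_norm) (continuous_supportFunction hA)
  rw [← SetLike.mem_coe, topologicalClosure_coe] at hu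
  refine closure_minimal (fun d hd => ?_) hclosed hu
  rcases eq_or_ne d 0 with rfl | hd0
  · simp [supportFunction_zero hne]
  · exact hmdw d hd hd0

theorem mem_convexHull_of_mem_span_of_norm_lt [CompleteSpace E] (hA : IsCompact A)
    (hne : A.Nonempty) (hm : 0 < m) {x : E} (hx : x ∈ span ℝ A) (hxm : ‖x‖ < m) :
    x ∈ convexHull ℝ A := by
  set W := (span ℝ A).topologicalClosure
  set A' : Set W := (↑) ⁻¹' A
  have hAW : A ⊆ W := fun z hz => le_topologicalClosure _ (subset_span hz)
  have hA' : IsCompact A' :=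
    (isClosed_topologicalClosure _).isClosedEmbedding_subtypeVal.isCompact_preimage hA
  have hne' : A'.Nonempty := let ⟨z, hz⟩ := hne; ⟨⟨z, hAW hz⟩, hz⟩
  have hball : Metric.closedBall (0 : W) m ⊆ closure (convexHull ℝ A') :=
    closedBall_subset_closure_convexHull hne' fun u => (supportFunction_subtype hAW u).symm ▸
      le_supportFunction_of_mem_topologicalClosure_span hmdw hA hne u.2
  have := FiniteDimensional.of_closedBall_subset_closure_convexHull hA' hm hball
  have hx' : (⟨x, le_topologicalClosure _ hx⟩ : W) ∈ convexHull ℝ A' :=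
    (convex_convexHull ℝ A').interior_closure_subset <|
      interior_maximal (Metric.ball_subset_closedBall.trans hball) Metric.isOpen_ball
        (mem_ball_zero_iff.2 hxm)
  have hA'A : W.subtype '' A' ⊆ A := by
    rintro _ ⟨z, hz, rfl⟩
    exact hz
  exact convexHull_mono hA'A (W.subtype.image_convexHull A' ▸ mem_image_of_mem _ hx')

theorem mul_gauge_convexHull_le_norm [CompleteSpace E] (hA : IsCompact A) (hm : 0 < m)
    {d : E} (hd : d ∈ span ℝ A) : m * gauge (convexHull ℝ A) d ≤ ‖d‖ := by
  rcases A.eq_empty_or_nonempty with rfl | hne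
  · rw [span_empty, mem_bot] at hd
    simp [hd]
  rw [← le_div_iff₀' hm]
  exact gauge_le_norm_div_of_forall_norm_lt_mem hm
    (fun x hx hxm => mem_convexHull_of_mem_span_of_norm_lt hmdw hA hne hm hx hxm) hd

end InnerProductSpace

theorem stmt_5_general {H : Type*} [NormedAddCommGroup H] [InnerProductSpace ℝ H] [CompleteSpace H]
    (A : Set H) (hA : IsCompact A)
    (f : H → ℝ) (f' : H → H)
    (μ m : ℝ) (hμ : 0 < μ) (hm : 0 < m)
    (hstrong : ∀ x ∈ span ℝ A, ∀ y ∈ span ℝ A,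
      f x + ⟪f' x, y - x⟫ + μ / 2 * ‖y - x‖ ^ 2 ≤ f y)
    (hmdw : ∀ d ∈ span ℝ A, d ≠ 0 → m * ‖d‖ ≤ sSup ((fun z => ⟪d, z⟫) '' A)) :
    ∀ x ∈ span ℝ A, ∀ y ∈ span ℝ A,
      f x + ⟪f' x, y - x⟫ + m ^ 2 * μ / 2 * gauge (convexHull ℝ A) (y - x) ^ 2 ≤ f y := by
  intro x hx y hy
  have hgauge : m * gauge (convexHull ℝ A) (y - x) ≤ ‖y - x‖ :=
    mul_gauge_convexHull_le_norm hmdw hA hm (sub_mem hy hx)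
  calc f x + ⟪f' x, y - x⟫ + m ^ 2 * μ / 2 * gauge (convexHull ℝ A) (y - x) ^ 2
      = f x + ⟪f' x, y - x⟫ + μ / 2 * (m * gauge (convexHull ℝ A) (y - x)) ^ 2 := by ring
    _ ≤ f x + ⟪f' x, y - x⟫ + μ / 2 * ‖y - x‖ ^ 2 := by
      gcongr
      exact mul_nonneg hm.le (gauge_nonneg _)
    _ ≤ f y := hstrong x hx y hy

/-- Lemma 6 of the paper: if `f` is `μ`-strongly convex w.r.t. the
Hilbert norm on `lin(A)` and `m > 0` lower bounds the minimal directional width of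
`A`, then `f` is `m² μ`-strongly convex w.r.t. the atomic norm on `lin(A)`. -/
theorem stmt_5 {H : Type*} [NormedAddCommGroup H] [InnerProductSpace ℝ H] [CompleteSpace H]
    (A : Set H) (hA : IsCompact A) (hsym : ∀ z ∈ A, -z ∈ A)
    (f : H → ℝ) (f' : H → H) (hgrad : ∀ x, HasGradientAt f (f' x) x)
    (hconv : ConvexOn ℝ univ f)
    (habs : ∀ x ∈ span ℝ A, ∃ c : ℝ, 0 < c ∧ x ∈ c • convexHull ℝ A)
    (hpos : ∀ x ∈ span ℝ A, x ≠ 0 → 0 < gauge (convexHull ℝ A) x)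
    (μ m : ℝ) (hμ : 0 < μ) (hm : 0 < m)
    (hstrong : ∀ x ∈ span ℝ A, ∀ y ∈ span ℝ A,
      f x + ⟪f' x, y - x⟫ + μ / 2 * ‖y - x‖ ^ 2 ≤ f y)
    (hmdw : ∀ d ∈ span ℝ A, d ≠ 0 → m * ‖d‖ ≤ sSup ((fun z => ⟪d, z⟫) '' A)) :
    ∀ x ∈ span ℝ A, ∀ y ∈ span ℝ A,
      f x + ⟪f' x, y - x⟫ + m ^ 2 * μ / 2 * gauge (convexHull ℝ A) (y - x) ^ 2 ≤ f y :=
  stmt_5_general A hA f f' μ m hμ hm hstrong hmdw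
end

section
/- Let δ ∈ (0,1], μ > 0, L > 0, and assume f is μ-strongly convex and L-smooth with respect to the Hilbert norm on lin(A), i.e. f(x) + ⟨∇f(x), y − x⟩ + (μ/2)‖y − x‖² ≤ f(y) ≤ f(x) + ⟨∇f(x), y − x⟩ + (L/2)‖y − x‖² for all x, y ∈ lin(A). Let r := sup_{z∈A} ‖z‖ and let m > 0 satisfy sup_{z∈A} ⟨d, z⟩ ≥ m·‖d‖ for every nonzero d ∈ lin(A) (minimal directional width). Let x⋆ ∈ lin(A) be a minimizer of f over lin(A). Starting from x₀ ∈ lin(A), define iterates by choosing z_t ∈ A with ⟨∇f(x_t), z_t⟩ ≤ δ · min_{z∈A} ⟨∇f(x_t), z⟩ and setting x_{t+1} = x_t − (⟨∇f(x_t), z_t⟩/(L·r²))·z_t. Then, writing ε_t := f(x_t) − f(x⋆), for every t ≥ 0: ε_{t+1} ≤ (1 − δ²·μ·m²/(L·r²))·ε_t. -/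
/-!
One step of matching pursuit along `z` with step size `⟨∇f(x), z⟩ / (L r²)` decreases `f` by at
least `⟨∇f(x), z⟩² / (2 L r²)`, by `L`-smoothness and `‖z‖ ≤ r`. By symmetry of `A` the
approximate linear minimization oracle gives `⟨∇f(x), z⟩² ≥ δ² G²`, where
`G = sup_{z ∈ A} ⟨∇f(x), z⟩`. Projecting `∇f(x)` orthogonally onto the closure of `lin(A)` and
using the minimal directional width (which passes to the closure, the support function of a compact
set being continuous) shows that `∇f(x)` has dual norm at most `G / m` on `lin(A)`; strong convexity
then bounds the suboptimality by `G² / (2 μ m²)`.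
-/

open Submodule Set Pointwise RealInnerProductSpace

section

variable {H : Type*} [NormedAddCommGroup H] [InnerProductSpace ℝ H] {A : Set H}

theorem le_sSup_inner_image (hA : IsCompact A) (d : H) {w : H} (hw : w ∈ A) :
    ⟪d, w⟫ ≤ sSup ((fun z => ⟪d, z⟫) '' A) :=
  le_csSup (hA.image (continuous_const.inner continuous_id)).bddAbove ⟨w, hw, rfl⟩

theorem sSup_inner_image_nonneg (hA : IsCompact A) (hsym : ∀ z ∈ A, -z ∈ A) (d : H) :
    0 ≤ sSup ((fun z => ⟪d, z⟫) '' A) := by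
  rcases A.eq_empty_or_nonempty with rfl | ⟨w, hw⟩
  · simp
  · have h := le_sSup_inner_image hA d hw
    have hneg := le_sSup_inner_image hA d (hsym w hw)
    rw [inner_neg_right] at hneg
    linarith

theorem sInf_inner_image_eq_neg_sSup (hsym : ∀ z ∈ A, -z ∈ A) (d : H) :
    sInf ((fun z => ⟪d, z⟫) '' A) = -sSup ((fun z => ⟪d, z⟫) '' A) := by
  rw [← Real.sInf_neg]
  congr 1
  ext v
  simp only [mem_image, Set.mem_neg]
  constructor
  · rintro ⟨w, hw, rfl⟩
    exact ⟨-w, hsym w hw, inner_neg_right d w⟩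
  · rintro ⟨w, hw, hv⟩
    exact ⟨-w, hsym w hw, by rw [inner_neg_right, hv, neg_neg]⟩

theorem continuous_sSup_inner_image (hA : IsCompact A) :
    Continuous fun d : H => sSup ((fun z => ⟪d, z⟫) '' A) :=
  hA.continuous_sSup (f := fun d z => ⟪d, z⟫) continuous_inner

theorem mul_norm_le_sSup_inner_image_of_mem_closure (hA : IsCompact A) {S : Set H} {m : ℝ}
    (hS : ∀ d ∈ S, m * ‖d‖ ≤ sSup ((fun z => ⟪d, z⟫) '' A)) {d : H} (hd : d ∈ closure S) :
    m * ‖d‖ ≤ sSup ((fun z => ⟪d, z⟫) '' A) :=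
  closure_minimal hS
    (isClosed_le (continuous_const.mul continuous_norm) (continuous_sSup_inner_image hA)) hd

theorem inner_le_sSup_inner_image_div_mul_norm [CompleteSpace H] (hA : IsCompact A) {m : ℝ}
    (hm : 0 < m) (hwidth : ∀ d ∈ span ℝ A, m * ‖d‖ ≤ sSup ((fun z => ⟪d, z⟫) '' A))
    (g : H) {d : H} (hd : d ∈ span ℝ A) :
    ⟪g, d⟫ ≤ sSup ((fun z => ⟪g, z⟫) '' A) / m * ‖d‖ := by
  set K := (span ℝ A).topologicalClosure
  set p := K.starProjection g
  have hp : ∀ w ∈ K, ⟪p, w⟫ = ⟪g, w⟫ := fun w hw => by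
    rw [inner_starProjection_left_eq_right, starProjection_eq_self_iff.mpr hw]
  have hpA : (fun z => ⟪p, z⟫) '' A = (fun z => ⟪g, z⟫) '' A :=
    image_congr fun w hw => hp w (le_topologicalClosure _ (subset_span hw))
  have hpK : p ∈ closure (span ℝ A : Set H) := by
    rw [← topologicalClosure_coe]
    exact K.starProjection_apply_mem g
  have hnorm_p : ‖p‖ ≤ sSup ((fun z => ⟪g, z⟫) '' A) / m := by
    rw [le_div_iff₀' hm, ← hpA]
    exact mul_norm_le_sSup_inner_image_of_mem_closure hA hwidth hpK
  calc ⟪g, d⟫ = ⟪p, d⟫ := (hp d (le_topologicalClosure _ hd)).symm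
    _ ≤ ‖p‖ * ‖d‖ := real_inner_le_norm p d
    _ ≤ _ := mul_le_mul_of_nonneg_right hnorm_p (norm_nonneg d)

theorem sq_mul_sq_sSup_le_sq_inner (hA : IsCompact A) (hsym : ∀ z ∈ A, -z ∈ A) {δ : ℝ}
    (hδ : 0 ≤ δ) {g w : H} (hw : ⟪g, w⟫ ≤ δ * sInf ((fun z => ⟪g, z⟫) '' A)) :
    δ ^ 2 * sSup ((fun z => ⟪g, z⟫) '' A) ^ 2 ≤ ⟪g, w⟫ ^ 2 := by
  rw [sInf_inner_image_eq_neg_sSup hsym] at hw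
  nlinarith [mul_nonneg hδ (sSup_inner_image_nonneg hA hsym g)]

theorem le_sub_sq_div_of_smooth_step {f : H → ℝ} {g x x' z : H} {L r : ℝ} (hL : 0 ≤ L)
    (hz : ‖z‖ ≤ r) (hsmooth : f x' ≤ f x + ⟪g, x' - x⟫ + L / 2 * ‖x' - x‖ ^ 2)
    (hx' : x' = x - (⟪g, z⟫ / (L * r ^ 2)) • z) :
    f x' ≤ f x - ⟪g, z⟫ ^ 2 / (2 * (L * r ^ 2)) := by
  subst hx'
  rw [sub_sub_cancel_left, inner_neg_right, real_inner_smul_right, norm_neg, norm_smul,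
    Real.norm_eq_abs, mul_pow, sq_abs] at hsmooth
  have hzr : L / 2 * ((⟪g, z⟫ / (L * r ^ 2)) ^ 2 * ‖z‖ ^ 2)
      ≤ L / 2 * ((⟪g, z⟫ / (L * r ^ 2)) ^ 2 * r ^ 2) := by
    gcongr
  have hstep : -(⟪g, z⟫ / (L * r ^ 2) * ⟪g, z⟫) + L / 2 * ((⟪g, z⟫ / (L * r ^ 2)) ^ 2 * r ^ 2)
      = -(⟪g, z⟫ ^ 2 / (2 * (L * r ^ 2))) := by
    rcases eq_or_ne (L * r ^ 2) 0 with hc | hc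
    · -- division by zero makes both the step and the claimed decrease vanish
      simp [hc]
    · field_simp
      ring
  linarith

theorem two_mul_sub_le_sq_of_strong_convexity {f : H → ℝ} {g x y : H} {μ a : ℝ}
    (hstrong : f x + ⟪g, y - x⟫ + μ / 2 * ‖y - x‖ ^ 2 ≤ f y) (hmin : f y ≤ f x)
    (ha : ⟪g, x - y⟫ ≤ a * ‖x - y‖) :
    2 * μ * (f x - f y) ≤ a ^ 2 := by
  rw [← neg_sub x y, inner_neg_right, norm_neg] at hstrong
  rcases le_or_gt μ 0 with hμ | hμ
  · nlinarith [sq_nonneg a]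
  · nlinarith [sq_nonneg (a - μ * ‖x - y‖)]

end

theorem stmt_6_general {H : Type*} [NormedAddCommGroup H] [InnerProductSpace ℝ H] [CompleteSpace H]
    (A : Set H) (hA : IsCompact A) (hsym : ∀ z ∈ A, -z ∈ A)
    (f : H → ℝ) (f' : H → H)
    (δ μ L r m : ℝ) (hδ0 : 0 < δ) (hL : 0 < L) (hm : 0 < m)
    (hstrong : ∀ x ∈ span ℝ A, ∀ y ∈ span ℝ A,
      f x + ⟪f' x, y - x⟫ + μ / 2 * ‖y - x‖ ^ 2 ≤ f y)
    (hsmooth : ∀ x ∈ span ℝ A, ∀ y ∈ span ℝ A,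
      f y ≤ f x + ⟪f' x, y - x⟫ + L / 2 * ‖y - x‖ ^ 2)
    (hr : r = sSup ((fun z : H => ‖z‖) '' A))
    (hmdw : ∀ d ∈ span ℝ A, d ≠ 0 → m * ‖d‖ ≤ sSup ((fun z => ⟪d, z⟫) '' A))
    (xs : H) (hxs : xs ∈ span ℝ A) (hmin : ∀ y ∈ span ℝ A, f xs ≤ f y)
    (x z : ℕ → H)
    (hx0 : x 0 ∈ span ℝ A)
    (hzA : ∀ t, z t ∈ A)
    (hlmo : ∀ t, ⟪f' (x t), z t⟫ ≤ δ * sInf ((fun w => ⟪f' (x t), w⟫) '' A))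
    (hupd : ∀ t, x (t + 1) = x t - (⟪f' (x t), z t⟫ / (L * r ^ 2)) • z t) :
    ∀ t : ℕ, f (x (t + 1)) - f xs ≤ (1 - δ ^ 2 * μ * m ^ 2 / (L * r ^ 2)) * (f (x t) - f xs) := by
  have hmem : ∀ t, x t ∈ span ℝ A := by
    intro t
    induction t with
    | zero => exact hx0
    | succ t ih => rw [hupd t]; exact sub_mem ih (smul_mem _ _ (subset_span (hzA t)))
  have hwidth : ∀ d ∈ span ℝ A, m * ‖d‖ ≤ sSup ((fun z => ⟪d, z⟫) '' A) := by
    intro d hd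
    rcases eq_or_ne d 0 with rfl | hd0
    · simpa using sSup_inner_image_nonneg hA hsym 0
    · exact hmdw d hd hd0
  intro t
  set G := sSup ((fun w => ⟪f' (x t), w⟫) '' A)
  have hzr : ‖z t‖ ≤ r := hr ▸ le_csSup (hA.image continuous_norm).bddAbove ⟨z t, hzA t, rfl⟩
  have hdescent : f (x (t + 1)) ≤ f (x t) - ⟪f' (x t), z t⟫ ^ 2 / (2 * (L * r ^ 2)) :=
    le_sub_sq_div_of_smooth_step hL.le hzr (hsmooth _ (hmem t) _ (hmem (t + 1))) (hupd t)
  have horacle : δ ^ 2 * G ^ 2 ≤ ⟪f' (x t), z t⟫ ^ 2 :=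
    sq_mul_sq_sSup_le_sq_inner hA hsym hδ0.le (hlmo t)
  have hPL : 2 * μ * m ^ 2 * (f (x t) - f xs) ≤ G ^ 2 := by
    have := two_mul_sub_le_sq_of_strong_convexity (hstrong _ (hmem t) _ hxs) (hmin _ (hmem t))
      (inner_le_sSup_inner_image_div_mul_norm hA hm hwidth _ (sub_mem (hmem t) hxs))
    rw [div_pow, le_div_iff₀ (by positivity)] at this
    linarith
  have hc : 0 ≤ 2 * (L * r ^ 2) := by nlinarith [sq_nonneg r]
  calc f (x (t + 1)) - f xs ≤ f (x t) - f xs - ⟪f' (x t), z t⟫ ^ 2 / (2 * (L * r ^ 2)) := by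
        linarith
    _ ≤ f (x t) - f xs - δ ^ 2 * G ^ 2 / (2 * (L * r ^ 2)) := by gcongr
    _ ≤ f (x t) - f xs - δ ^ 2 * (2 * μ * m ^ 2 * (f (x t) - f xs)) / (2 * (L * r ^ 2)) := by
        gcongr
    _ = (1 - δ ^ 2 * μ * m ^ 2 / (L * r ^ 2)) * (f (x t) - f xs) := by ring

/-- the non-affine-invariant linear rate of generalized matching
pursuit, expressed via the Hilbert-norm smoothness `L`, strong convexity `μ`, the
radius `r` of `A` and a lower bound `m` on the minimal directional width of `A`. -/
theorem stmt_6 {H : Type*} [NormedAddCommGroup H] [InnerProductSpace ℝ H] [CompleteSpace H]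
    (A : Set H) (hA : IsCompact A) (hsym : ∀ z ∈ A, -z ∈ A)
    (f : H → ℝ) (f' : H → H) (hgrad : ∀ x, HasGradientAt f (f' x) x)
    (hconv : ConvexOn ℝ univ f)
    (habs : ∀ x ∈ span ℝ A, ∃ c : ℝ, 0 < c ∧ x ∈ c • convexHull ℝ A)
    (hpos : ∀ x ∈ span ℝ A, x ≠ 0 → 0 < gauge (convexHull ℝ A) x)
    (δ μ L r m : ℝ) (hδ0 : 0 < δ) (hδ1 : δ ≤ 1) (hμ : 0 < μ) (hL : 0 < L) (hm : 0 < m)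
    (hstrong : ∀ x ∈ span ℝ A, ∀ y ∈ span ℝ A,
      f x + ⟪f' x, y - x⟫ + μ / 2 * ‖y - x‖ ^ 2 ≤ f y)
    (hsmooth : ∀ x ∈ span ℝ A, ∀ y ∈ span ℝ A,
      f y ≤ f x + ⟪f' x, y - x⟫ + L / 2 * ‖y - x‖ ^ 2)
    (hr : r = sSup ((fun z : H => ‖z‖) '' A))
    (hmdw : ∀ d ∈ span ℝ A, d ≠ 0 → m * ‖d‖ ≤ sSup ((fun z => ⟪d, z⟫) '' A))
    (xs : H) (hxs : xs ∈ span ℝ A) (hmin : ∀ y ∈ span ℝ A, f xs ≤ f y)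
    (x z : ℕ → H)
    (hx0 : x 0 ∈ span ℝ A)
    (hzA : ∀ t, z t ∈ A)
    (hlmo : ∀ t, ⟪f' (x t), z t⟫ ≤ δ * sInf ((fun w => ⟪f' (x t), w⟫) '' A))
    (hupd : ∀ t, x (t + 1) = x t - (⟪f' (x t), z t⟫ / (L * r ^ 2)) • z t) :
    ∀ t : ℕ, f (x (t + 1)) - f xs ≤ (1 - δ ^ 2 * μ * m ^ 2 / (L * r ^ 2)) * (f (x t) - f xs) :=
  stmt_6_general A hA hsym f f' δ μ L r m hδ0 hL hm hstrong hsmooth hr hmdw xs hxs hmin x z hx0 hzA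
    hlmo hupd
end

section
/- Let f : ℝⁿ → ℝ be convex and differentiable, and L₁-smooth with respect to the ℓ1 norm: f(x + γz) ≤ f(x) + γ⟨∇f(x), z⟩ + (L₁/2)γ² for all x ∈ ℝⁿ, all z with ‖z‖₁ = 1, and all γ > 0, with L₁ > 0. Let x⋆ be a minimizer of f over ℝⁿ, and let R₁ ≥ 0 satisfy ‖x − x⋆‖₁ ≤ R₁ for every x with f(x) ≤ f(x₀). Define steepest coordinate descent from x₀: i_t ∈ argmax_i |∂_i f(x_t)| and x_{t+1} = x_t − (1/L₁)·∂_{i_t} f(x_t)·e_{i_t}, where e_i are the standard basis vectors. Then for every t ≥ 0: f(x_{t+1}) − f(x⋆) ≤ 2·L₁·R₁²/(t + 2). -/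
/-!
Along the steepest coordinate the ℓ1-smoothness bound is the descent lemma
`f (x_{t+1}) ≤ f (x_t) - (∂_{i_t} f (x_t))² / (2 L₁)`. Since the iterates stay in the initial
sublevel set, convexity and ℓ∞–ℓ1 duality give `δ_t := f (x_t) - f x⋆ ≤ |∂_{i_t} f (x_t)| R₁`,
hence `δ_t² ≤ 2 L₁ R₁² (δ_t - δ_{t+1})`, and any sequence with this property decays like
`2 L₁ R₁² / (t + 1)`.
-/

open Set RealInnerProductSpace

theorem ConvexOn.add_fderiv_sub_le {E : Type*} [NormedAddCommGroup E] [NormedSpace ℝ E]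
    {s : Set E} {f : E → ℝ} {f' : E →L[ℝ] ℝ} {x y : E} (hf : ConvexOn ℝ s f)
    (hx : x ∈ s) (hy : y ∈ s) (hf' : HasFDerivAt f f' x) :
    f x + f' (y - x) ≤ f y := by
  have hline : HasDerivAt (f ∘ AffineMap.lineMap (k := ℝ) x y) (f' (y - x)) 0 :=
    hf'.comp_hasDerivAt_of_eq (0 : ℝ) AffineMap.hasDerivAt_lineMap
      (AffineMap.lineMap_apply_zero x y).symm
  have := (hf.comp_affineMap (AffineMap.lineMap (k := ℝ) x y)).le_slope_of_hasDerivAt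
    (by simpa) (by simpa) zero_lt_one hline
  simp only [slope_def_field, Function.comp_apply, AffineMap.lineMap_apply_one,
    AffineMap.lineMap_apply_zero, sub_zero, div_one] at this
  linarith

theorem inner_le_abs_mul_sum_abs {ι : Type*} [Fintype ι] {g : EuclideanSpace ℝ ι} {i : ι}
    (hi : ∀ j, |g j| ≤ |g i|) (v : EuclideanSpace ℝ ι) : ⟪g, v⟫ ≤ |g i| * ∑ j, |v j| := by
  rw [PiLp.inner_apply, Finset.mul_sum]
  gcongr with j
  calc ⟪g j, v j⟫ = v j * g j := rfl
    _ ≤ |v j * g j| := le_abs_self _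
    _ ≤ |g i| * |v j| := by
      rw [abs_mul, mul_comm]
      exact mul_le_mul_of_nonneg_right (hi j) (abs_nonneg _)

theorem sum_abs_smul_single {ι : Type*} [Fintype ι] [DecidableEq ι] (c : ℝ) (j : ι) :
    ∑ k, |(c • EuclideanSpace.single j (1 : ℝ)) k| = |c| := by
  simp [apply_ite]

theorem apply_sub_smul_single_le {ι : Type*} [Fintype ι] [DecidableEq ι]
    {f : EuclideanSpace ℝ ι → ℝ} {g x : EuclideanSpace ℝ ι} {L : ℝ} (hL : 0 < L)
    (hsmooth : ∀ z : EuclideanSpace ℝ ι, ∑ k, |z k| = 1 →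
      ∀ γ : ℝ, 0 < γ → f (x + γ • z) ≤ f x + γ * ⟪g, z⟫ + L / 2 * γ ^ 2) (j : ι) :
    f (x - (g j / L) • EuclideanSpace.single j 1) ≤ f x - g j ^ 2 / (2 * L) := by
  rcases eq_or_ne (g j) 0 with hg | hg
  · simp [hg]
  have hgabs : 0 < |g j| := abs_pos.mpr hg
  set z := (-(g j / |g j|)) • EuclideanSpace.single j (1 : ℝ)
  have hz : ∑ k, |z k| = 1 := by
    rw [sum_abs_smul_single, abs_neg, abs_div, abs_abs, div_self hgabs.ne']
  have hstep : x + (|g j| / L) • z = x - (g j / L) • EuclideanSpace.single j 1 := by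
    rw [smul_smul, sub_eq_add_neg, ← neg_smul]
    congr 2
    field_simp
  have hinner : ⟪g, z⟫ = -|g j| := by
    rw [real_inner_smul_right, EuclideanSpace.inner_single_right]
    field_simp
    rw [conj_trivial, sq_abs, sq]
  have := hsmooth z hz (|g j| / L) (div_pos hgabs hL)
  rw [hstep, hinner] at this
  calc _ ≤ _ := this
    _ = f x - g j ^ 2 / (2 * L) := by field_simp; rw [sq_abs]; ring

theorem le_div_add_two_of_sq_le_mul_sub {δ : ℕ → ℝ} {C : ℝ} (hC : 0 ≤ C)
    (hrec : ∀ s, δ s ^ 2 ≤ C * (δ s - δ (s + 1))) (t : ℕ) :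
    δ (t + 1) ≤ C / (t + 2) := by
  rcases hC.eq_or_lt with rfl | hC
  · rw [zero_div]
    nlinarith [hrec (t + 1)]
  rw [le_div_iff₀ (by positivity)]
  refine le_of_mul_le_mul_left ?_ hC
  induction t with
  | zero =>
    simp only [Nat.cast_zero, zero_add]
    nlinarith [hrec 0, sq_nonneg (C - δ 0), sq_nonneg (δ 0)]
  | succ t ih =>
    have ih := le_of_mul_le_mul_left ih hC
    -- with `a = δ (t + 1)`: `C² - (t + 3) (C a - a²) = (C - (t + 2) a) (C - a) + a²`
    push_cast
    nlinarith [hrec (t + 1),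
      mul_nonneg (sub_nonneg.mpr ih) (by nlinarith : 0 ≤ C - δ (t + 1))]

theorem stmt_7_general (n : ℕ) (f : EuclideanSpace ℝ (Fin n) → ℝ)
    (f' : EuclideanSpace ℝ (Fin n) → EuclideanSpace ℝ (Fin n))
    (hgrad : ∀ x, HasGradientAt f (f' x) x)
    (hconv : ConvexOn ℝ univ f)
    (L1 : ℝ) (hL1 : 0 < L1)
    (hsmooth : ∀ x z : EuclideanSpace ℝ (Fin n), (∑ i, |z i|) = 1 →
      ∀ γ : ℝ, 0 < γ → f (x + γ • z) ≤ f x + γ * ⟪f' x, z⟫ + L1 / 2 * γ ^ 2)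
    (xs : EuclideanSpace ℝ (Fin n)) (hmin : ∀ y, f xs ≤ f y)
    (R1 : ℝ)
    (x : ℕ → EuclideanSpace ℝ (Fin n)) (i : ℕ → Fin n)
    (hlevel : ∀ y : EuclideanSpace ℝ (Fin n), f y ≤ f (x 0) → (∑ j, |y j - xs j|) ≤ R1)
    (hsteep : ∀ t j, |f' (x t) j| ≤ |f' (x t) (i t)|)
    (hupd : ∀ t, x (t + 1) = x t - (f' (x t) (i t) / L1) • EuclideanSpace.single (i t) 1) :
    ∀ t : ℕ, f (x (t + 1)) - f xs ≤ 2 * L1 * R1 ^ 2 / ((t : ℝ) + 2) := by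
  have hdescent (s : ℕ) : f (x (s + 1)) ≤ f (x s) - f' (x s) (i s) ^ 2 / (2 * L1) :=
    hupd s ▸ apply_sub_smul_single_le hL1 (hsmooth (x s)) (i s)
  have hanti : Antitone (f ∘ x) :=
    antitone_nat_of_succ_le fun s => (hdescent s).trans (sub_le_self _ (by positivity))
  have hgap (s : ℕ) : f (x s) - f xs ≤ |f' (x s) (i s)| * R1 := calc
    f (x s) - f xs ≤ ⟪f' (x s), x s - xs⟫ := by
      have := hconv.add_fderiv_sub_le (mem_univ (x s)) (mem_univ xs) (hgrad (x s)).hasFDerivAt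
      rw [InnerProductSpace.toDual_apply_apply, ← neg_sub, inner_neg_right] at this
      linarith
    _ ≤ |f' (x s) (i s)| * ∑ j, |x s j - xs j| := inner_le_abs_mul_sum_abs (hsteep s) _
    _ ≤ |f' (x s) (i s)| * R1 := by gcongr; exact hlevel _ (hanti (Nat.zero_le s))
  have hrec (s : ℕ) : (f (x s) - f xs) ^ 2
      ≤ 2 * L1 * R1 ^ 2 * ((f (x s) - f xs) - (f (x (s + 1)) - f xs)) := by
    have hsq : (f (x s) - f xs) ^ 2 ≤ f' (x s) (i s) ^ 2 * R1 ^ 2 := by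
      rw [← sq_abs (f' (x s) (i s)), ← mul_pow]
      exact pow_le_pow_left₀ (sub_nonneg.mpr (hmin _)) (hgap s) 2
    have hdec := hdescent s
    rw [le_sub_iff_add_le, ← le_sub_iff_add_le', div_le_iff₀ (by positivity)] at hdec
    calc _ ≤ f' (x s) (i s) ^ 2 * R1 ^ 2 := hsq
      _ ≤ (f (x s) - f (x (s + 1))) * (2 * L1) * R1 ^ 2 := by gcongr
      _ = _ := by ring
  exact le_div_add_two_of_sq_le_mul_sub (by positivity) hrec

/-- sublinear rate of steepest coordinate descent for a convex
function `f : ℝⁿ → ℝ` that is `L₁`-smooth w.r.t. the ℓ1 norm. -/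
theorem stmt_7 (n : ℕ) (f : EuclideanSpace ℝ (Fin n) → ℝ)
    (f' : EuclideanSpace ℝ (Fin n) → EuclideanSpace ℝ (Fin n))
    (hgrad : ∀ x, HasGradientAt f (f' x) x)
    (hconv : ConvexOn ℝ univ f)
    (L1 : ℝ) (hL1 : 0 < L1)
    (hsmooth : ∀ x z : EuclideanSpace ℝ (Fin n), (∑ i, |z i|) = 1 →
      ∀ γ : ℝ, 0 < γ → f (x + γ • z) ≤ f x + γ * ⟪f' x, z⟫ + L1 / 2 * γ ^ 2)
    (xs : EuclideanSpace ℝ (Fin n)) (hmin : ∀ y, f xs ≤ f y)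
    (R1 : ℝ) (hR1 : 0 ≤ R1)
    (x : ℕ → EuclideanSpace ℝ (Fin n)) (i : ℕ → Fin n)
    (hlevel : ∀ y : EuclideanSpace ℝ (Fin n), f y ≤ f (x 0) → (∑ j, |y j - xs j|) ≤ R1)
    (hsteep : ∀ t j, |f' (x t) j| ≤ |f' (x t) (i t)|)
    (hupd : ∀ t, x (t + 1) = x t - (f' (x t) (i t) / L1) • EuclideanSpace.single (i t) 1) :
    ∀ t : ℕ, f (x (t + 1)) - f xs ≤ 2 * L1 * R1 ^ 2 / ((t : ℝ) + 2) :=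
  stmt_7_general n f f' hgrad hconv L1 hL1 hsmooth xs hmin R1 x i hlevel hsteep hupd
end

section
/- Let f : ℝⁿ → ℝ be convex and differentiable, L₁-smooth with respect to the ℓ1 norm (f(x + γz) ≤ f(x) + γ⟨∇f(x), z⟩ + (L₁/2)γ² for all x, all z with ‖z‖₁ = 1, and all γ > 0) and μ₁-strongly convex with respect to the ℓ1 norm (f(y) ≥ f(x) + ⟨∇f(x), y − x⟩ + (μ₁/2)‖y − x‖₁² for all x, y), with 0 < μ₁ ≤ L₁. Let x⋆ be the minimizer of f. Define steepest coordinate descent from x₀: i_t ∈ argmax_i |∂_i f(x_t)| and x_{t+1} = x_t − (1/L₁)·∂_{i_t} f(x_t)·e_{i_t}. Then, writing ε_t := f(x_t) − f(x⋆), for every t ≥ 0: ε_{t+1} ≤ (1 − μ₁/L₁)·ε_t. -/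
open Set RealInnerProductSpace

/-!
With `g = ∇f(x)`, the step of length `|g k| / L` along the ℓ1-unit vector `-sign (g k) e_k` lowers
`f` by at least `g k ^ 2 / (2L)`, which for the steepest coordinate is `‖g‖∞² / (2L)`. Conversely,
by Hölder `⟪g, y - x⟫ ≥ -‖g‖∞ ‖y - x‖₁`, so ℓ1 strong convexity bounds `f x - f y` by the maximum
over `s ≥ 0` of `‖g‖∞ s - μ s² / 2`, i.e. by `‖g‖∞² / (2μ)`, for every `y`. Chaining the two bounds
gives the contraction factor `1 - μ / L`.
-/

section
variable {ι : Type*} [Fintype ι]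

lemma abs_inner_le_mul_sum_abs {g v : EuclideanSpace ℝ ι} {a : ℝ} (hg : ∀ j, |g j| ≤ a) :
    |⟪g, v⟫| ≤ a * ∑ j, |v j| := by
  simp only [PiLp.inner_apply, RCLike.inner_apply, conj_trivial, Finset.mul_sum]
  refine (Finset.abs_sum_le_sum_abs _ _).trans (Finset.sum_le_sum fun j _ => ?_)
  rw [abs_mul, mul_comm]
  exact mul_le_mul_of_nonneg_right (hg j) (abs_nonneg _)

lemma sum_abs_single [DecidableEq ι] (k : ι) (c : ℝ) :
    ∑ j, |(EuclideanSpace.single k c : EuclideanSpace ℝ ι) j| = |c| := by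
  simp [apply_ite]

lemma sub_le_sq_div_of_l1_strongConvex {f : EuclideanSpace ℝ ι → ℝ} {g x y : EuclideanSpace ℝ ι}
    {μ a : ℝ} (hμ : 0 < μ) (hg : ∀ j, |g j| ≤ a)
    (hstrong : f x + ⟪g, y - x⟫ + μ / 2 * (∑ j, |y j - x j|) ^ 2 ≤ f y) :
    f x - f y ≤ a ^ 2 / (2 * μ) := by
  set s := ∑ j, |y j - x j|
  have hinner : |⟪g, y - x⟫| ≤ a * s := by
    simpa only [PiLp.sub_apply] using abs_inner_le_mul_sum_abs (v := y - x) hg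
  have := (abs_le.1 hinner).1
  rw [le_div_iff₀ (by positivity)]
  nlinarith [sq_nonneg (a - μ * s)]

lemma le_sub_sq_div_of_l1_smooth [DecidableEq ι] {f : EuclideanSpace ℝ ι → ℝ}
    {g x : EuclideanSpace ℝ ι} {L : ℝ} (hL : 0 < L)
    (hsmooth : ∀ z : EuclideanSpace ℝ ι, ∑ j, |z j| = 1 →
      ∀ γ : ℝ, 0 < γ → f (x + γ • z) ≤ f x + γ * ⟪g, z⟫ + L / 2 * γ ^ 2) (k : ι) :
    f (x - (g k / L) • EuclideanSpace.single k 1) ≤ f x - g k ^ 2 / (2 * L) := by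
  rcases eq_or_ne (g k) 0 with hgk | hgk
  · simp [hgk]
  have habs : 0 < |g k| := abs_pos.2 hgk
  have hstep : x - (g k / L) • EuclideanSpace.single k 1
      = x + (|g k| / L) • EuclideanSpace.single k (-(g k / |g k|)) := by
    ext j
    by_cases hj : j = k
    · subst hj
      simp only [PiLp.sub_apply, PiLp.add_apply, PiLp.smul_apply, PiLp.single_eq_same, smul_eq_mul,
        mul_one, mul_neg]
      field_simp
      ring
    · simp [hj]
  have hunit : ∑ j, |(EuclideanSpace.single k (-(g k / |g k|)) : EuclideanSpace ℝ ι) j| = 1 := by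
    rw [sum_abs_single, abs_neg, abs_div, abs_abs, div_self habs.ne']
  have hinner : ⟪g, EuclideanSpace.single k (-(g k / |g k|))⟫ = -|g k| := by
    rw [EuclideanSpace.inner_single_right, conj_trivial]
    field_simp; rw [sq_abs]
  calc f (x - (g k / L) • EuclideanSpace.single k 1)
      ≤ f x + |g k| / L * -|g k| + L / 2 * (|g k| / L) ^ 2 := by
        rw [hstep, ← hinner]; exact hsmooth _ hunit _ (div_pos habs hL)
    _ = f x - g k ^ 2 / (2 * L) := by field_simp; rw [sq_abs]; ring

end

theorem stmt_8_general (n : ℕ) (f : EuclideanSpace ℝ (Fin n) → ℝ)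
    (f' : EuclideanSpace ℝ (Fin n) → EuclideanSpace ℝ (Fin n))
    (L1 μ1 : ℝ) (hμ1 : 0 < μ1) (hμL : μ1 ≤ L1)
    (hsmooth : ∀ x z : EuclideanSpace ℝ (Fin n), (∑ i, |z i|) = 1 →
      ∀ γ : ℝ, 0 < γ → f (x + γ • z) ≤ f x + γ * ⟪f' x, z⟫ + L1 / 2 * γ ^ 2)
    (hstrong : ∀ x y : EuclideanSpace ℝ (Fin n),
      f x + ⟪f' x, y - x⟫ + μ1 / 2 * (∑ i, |y i - x i|) ^ 2 ≤ f y)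
    (xs : EuclideanSpace ℝ (Fin n))
    (x : ℕ → EuclideanSpace ℝ (Fin n)) (i : ℕ → Fin n)
    (hsteep : ∀ t j, |f' (x t) j| ≤ |f' (x t) (i t)|)
    (hupd : ∀ t, x (t + 1) = x t - (f' (x t) (i t) / L1) • EuclideanSpace.single (i t) 1) :
    ∀ t : ℕ, f (x (t + 1)) - f xs ≤ (1 - μ1 / L1) * (f (x t) - f xs) := by
  intro t
  have hL1 : 0 < L1 := hμ1.trans_le hμL
  set g := f' (x t) (i t)
  have hdescent : f (x (t + 1)) ≤ f (x t) - g ^ 2 / (2 * L1) :=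
    hupd t ▸ le_sub_sq_div_of_l1_smooth hL1 (hsmooth (x t)) (i t)
  have hgap : f (x t) - f xs ≤ g ^ 2 / (2 * μ1) := by
    simpa only [sq_abs] using sub_le_sq_div_of_l1_strongConvex hμ1 (hsteep t) (hstrong (x t) xs)
  calc f (x (t + 1)) - f xs ≤ (f (x t) - f xs) - μ1 / L1 * (g ^ 2 / (2 * μ1)) := by
        field_simp at hdescent ⊢; linarith
    _ ≤ (f (x t) - f xs) - μ1 / L1 * (f (x t) - f xs) := by gcongr
    _ = (1 - μ1 / L1) * (f (x t) - f xs) := by ring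

/-- linear rate of steepest coordinate descent for a convex function
`f : ℝⁿ → ℝ` that is `L₁`-smooth and `μ₁`-strongly convex w.r.t. the ℓ1 norm. -/
theorem stmt_8 (n : ℕ) (f : EuclideanSpace ℝ (Fin n) → ℝ)
    (f' : EuclideanSpace ℝ (Fin n) → EuclideanSpace ℝ (Fin n))
    (hgrad : ∀ x, HasGradientAt f (f' x) x)
    (hconv : ConvexOn ℝ univ f)
    (L1 μ1 : ℝ) (hμ1 : 0 < μ1) (hμL : μ1 ≤ L1)
    (hsmooth : ∀ x z : EuclideanSpace ℝ (Fin n), (∑ i, |z i|) = 1 →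
      ∀ γ : ℝ, 0 < γ → f (x + γ • z) ≤ f x + γ * ⟪f' x, z⟫ + L1 / 2 * γ ^ 2)
    (hstrong : ∀ x y : EuclideanSpace ℝ (Fin n),
      f x + ⟪f' x, y - x⟫ + μ1 / 2 * (∑ i, |y i - x i|) ^ 2 ≤ f y)
    (xs : EuclideanSpace ℝ (Fin n)) (hmin : ∀ y, f xs ≤ f y)
    (x : ℕ → EuclideanSpace ℝ (Fin n)) (i : ℕ → Fin n)
    (hsteep : ∀ t j, |f' (x t) j| ≤ |f' (x t) (i t)|)
    (hupd : ∀ t, x (t + 1) = x t - (f' (x t) (i t) / L1) • EuclideanSpace.single (i t) 1) :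
    ∀ t : ℕ, f (x (t + 1)) - f xs ≤ (1 - μ1 / L1) * (f (x t) - f xs) :=
  stmt_8_general n f f' L1 μ1 hμ1 hμL hsmooth hstrong xs x i hsteep hupd
end

section
/- Assume f is μ_A-strongly convex with respect to the atomic norm on lin(A), with μ_A > 0, and let x⋆ ∈ lin(A) be a minimizer of f over lin(A). Then for every x ∈ lin(A): (sup_{z∈A} ⟨−∇f(x), z⟩)² ≥ 2·μ_A·(f(x) − f(x⋆)). (Equivalently, the dual atomic norm of the component of the gradient along lin(A) satisfies a Polyak–Łojasiewicz-type inequality.) -/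
open Submodule Set Pointwise RealInnerProductSpace

namespace LinearMap

variable {E : Type*} [AddCommGroup E] [Module ℝ E]

theorem sSup_image_nonneg_of_neg_mem (ℓ : E →ₗ[ℝ] ℝ) {A : Set E} (hsym : ∀ z ∈ A, -z ∈ A)
    (hbdd : BddAbove (ℓ '' A)) : 0 ≤ sSup (ℓ '' A) := by
  rcases A.eq_empty_or_nonempty with rfl | ⟨z, hz⟩
  · simp
  have hle : ∀ y ∈ A, ℓ y ≤ sSup (ℓ '' A) := fun y hy => le_csSup hbdd (mem_image_of_mem ℓ hy)
  have hneg := hle (-z) (hsym z hz)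
  rw [map_neg] at hneg
  linarith [hle z hz]

theorem le_mul_gauge_of_forall_le (ℓ : E →ₗ[ℝ] ℝ) {K : Set E} {D : ℝ} (hD : 0 ≤ D)
    (hK : ∀ u ∈ K, ℓ u ≤ D) {w : E} (hw : ∃ c : ℝ, 0 < c ∧ w ∈ c • K) :
    ℓ w ≤ D * gauge K w := by
  rw [gauge_def, ← smul_eq_mul, ← Real.sInf_smul_of_nonneg hD]
  obtain ⟨c, hc, hcw⟩ := hw
  refine le_csInf ⟨D • c, smul_mem_smul_set ⟨hc, hcw⟩⟩ ?_
  rintro _ ⟨b, ⟨hb, u, hu, rfl⟩, rfl⟩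
  simp only [map_smul, smul_eq_mul, mul_comm D]
  exact mul_le_mul_of_nonneg_left (hK u hu) (le_of_lt hb)

end LinearMap

theorem stmt_9_general {H : Type*} [NormedAddCommGroup H] [InnerProductSpace ℝ H]
    (A : Set H) (hA : IsCompact A) (hsym : ∀ z ∈ A, -z ∈ A)
    (f : H → ℝ) (f' : H → H)
    (habs : ∀ x ∈ span ℝ A, ∃ c : ℝ, 0 < c ∧ x ∈ c • convexHull ℝ A)
    (μA : ℝ) (hμA : 0 < μA)
    (hstrong : ∀ x ∈ span ℝ A, ∀ y ∈ span ℝ A,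
      f x + ⟪f' x, y - x⟫ + μA / 2 * gauge (convexHull ℝ A) (y - x) ^ 2 ≤ f y)
    (xs : H) (hxs : xs ∈ span ℝ A) :
    ∀ x ∈ span ℝ A,
      2 * μA * (f x - f xs) ≤ (sSup ((fun z => ⟪-f' x, z⟫) '' A)) ^ 2 := by
  intro x hx
  let ℓ : H →ₗ[ℝ] ℝ := innerₛₗ ℝ (-f' x)
  change 2 * μA * (f x - f xs) ≤ sSup (ℓ '' A) ^ 2
  have hbdd : BddAbove (ℓ '' A) := (hA.image (innerSL ℝ (-f' x)).continuous).bddAbove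
  set D := sSup (ℓ '' A)
  have hhull : ∀ u ∈ convexHull ℝ A, ℓ u ≤ D :=
    convexHull_min (fun z hz => le_csSup hbdd (mem_image_of_mem ℓ hz))
      (convex_halfSpace_le ℓ.isLinear D)
  have hdual : ℓ (xs - x) ≤ D * gauge (convexHull ℝ A) (xs - x) :=
    ℓ.le_mul_gauge_of_forall_le (ℓ.sSup_image_nonneg_of_neg_mem hsym hbdd) hhull
      (habs _ (sub_mem hxs hx))
  have hℓ : ℓ (xs - x) = -⟪f' x, xs - x⟫ := inner_neg_left _ _
  -- minimizing `-D t + μA/2 t²` over `t` bounds the decrease by `D² / (2 μA)`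
  nlinarith [sq_nonneg (D - μA * gauge (convexHull ℝ A) (xs - x)), hstrong x hx xs hxs]

/-- a Polyak–Łojasiewicz-type inequality for functions that are
`μ_A`-strongly convex w.r.t. the atomic norm on `lin(A)`: the squared dual atomic
norm of the negative gradient dominates `2 μ_A (f(x) − f(x⋆))`. -/
theorem stmt_9 {H : Type*} [NormedAddCommGroup H] [InnerProductSpace ℝ H] [CompleteSpace H]
    (A : Set H) (hA : IsCompact A) (hsym : ∀ z ∈ A, -z ∈ A)
    (f : H → ℝ) (f' : H → H) (hgrad : ∀ x, HasGradientAt f (f' x) x)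
    (hconv : ConvexOn ℝ univ f)
    (habs : ∀ x ∈ span ℝ A, ∃ c : ℝ, 0 < c ∧ x ∈ c • convexHull ℝ A)
    (hpos : ∀ x ∈ span ℝ A, x ≠ 0 → 0 < gauge (convexHull ℝ A) x)
    (μA : ℝ) (hμA : 0 < μA)
    (hstrong : ∀ x ∈ span ℝ A, ∀ y ∈ span ℝ A,
      f x + ⟪f' x, y - x⟫ + μA / 2 * gauge (convexHull ℝ A) (y - x) ^ 2 ≤ f y)
    (xs : H) (hxs : xs ∈ span ℝ A) (hmin : ∀ y ∈ span ℝ A, f xs ≤ f y) :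
    ∀ x ∈ span ℝ A,
      2 * μA * (f x - f xs) ≤ (sSup ((fun z => ⟪-f' x, z⟫) '' A)) ^ 2 :=
  stmt_9_general A hA hsym f f' habs μA hμA hstrong xs hxs
end

section
/- Let δ ∈ (0,1] and L_A > 0, and assume f is L_A-smooth with respect to the atomic norm on lin(A). Let x ∈ lin(A), let z̃ ∈ A satisfy ⟨∇f(x), z̃⟩ ≤ δ · min_{z∈A} ⟨∇f(x), z⟩ (δ-approximate LMO), and set x⁺ := x − (⟨∇f(x), z̃⟩/L_A)·z̃. Then f(x⁺) ≤ f(x) − (δ²/(2·L_A)) · (sup_{z∈A} ⟨−∇f(x), z⟩)². -/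
open Submodule Set Pointwise RealInnerProductSpace

/-!
Rescale `z̃` (of atomic norm `t ≤ 1`) to atomic norm one and apply smoothness with the step
minimising the quadratic upper bound: the decrease is `c² (2 - t²) / (2 L_A) ≥ c² / (2 L_A)` for
`c = ⟪∇f(x), z̃⟫`. Since `A = -A`, the minimum of `⟪∇f(x), ·⟫` over `A` is minus the supremum of
`⟪-∇f(x), ·⟫`, which is nonnegative, so the LMO condition gives `c ≤ -δ sup ≤ 0` and hence
`c² ≥ δ² sup²`.
-/

section

variable {H : Type*} [NormedAddCommGroup H] [InnerProductSpace ℝ H]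

theorem sInf_image_inner_eq_neg_sSup (A : Set H) (g : H) :
    sInf ((fun w => ⟪g, w⟫) '' A) = -sSup ((fun z => ⟪-g, z⟫) '' A) := by
  rw [Real.sInf_def, ← image_neg_eq_neg, image_image]
  simp only [inner_neg_left]

theorem sSup_image_inner_nonneg_of_neg_mem {A : Set H} (hA : IsCompact A)
    (hsym : ∀ z ∈ A, -z ∈ A) (hne : A.Nonempty) (g : H) :
    0 ≤ sSup ((fun z => ⟪g, z⟫) '' A) := by
  obtain ⟨z, hz⟩ := hne
  have hbdd : BddAbove ((fun z => ⟪g, z⟫) '' A) := (hA.image (by fun_prop)).bddAbove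
  have h₁ : ⟪g, z⟫ ≤ _ := le_csSup hbdd (mem_image_of_mem _ hz)
  have h₂ : ⟪g, -z⟫ ≤ _ := le_csSup hbdd (mem_image_of_mem _ (hsym z hz))
  rw [inner_neg_right] at h₂
  linarith

theorem le_sub_sq_div_of_gauge_le_one {K : Set H} {V : Submodule ℝ H} {f : H → ℝ}
    {f' : H → H} {L : ℝ} (hL : 0 < L)
    (hsmooth : ∀ x ∈ V, ∀ z ∈ V, gauge K z = 1 →
      ∀ γ : ℝ, 0 < γ → f (x + γ • z) ≤ f x + γ * ⟪f' x, z⟫ + L / 2 * γ ^ 2)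
    (hpos : ∀ u ∈ V, u ≠ 0 → 0 < gauge K u)
    {x u : H} (hx : x ∈ V) (hu : u ∈ V) (hu₁ : gauge K u ≤ 1) (hc : ⟪f' x, u⟫ ≤ 0) :
    f (x - (⟪f' x, u⟫ / L) • u) ≤ f x - ⟪f' x, u⟫ ^ 2 / (2 * L) := by
  set c := ⟪f' x, u⟫
  rcases hc.eq_or_lt with hc₀ | hc₀
  · simp [hc₀]
  have hu₀ : u ≠ 0 := by rintro rfl; simp [c] at hc₀
  set t := gauge K u
  have ht : 0 < t := hpos u hu hu₀
  have hz : gauge K (t⁻¹ • u) = 1 := by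
    rw [gauge_smul_of_nonneg (inv_nonneg.2 ht.le), smul_eq_mul, inv_mul_cancel₀ ht.ne']
  have hstep : x + (-c / L * t) • (t⁻¹ • u) = x - (c / L) • u := by
    rw [smul_smul, mul_assoc, mul_inv_cancel₀ ht.ne', mul_one, neg_div, neg_smul, ← sub_eq_add_neg]
  have key := hsmooth x hx _ (V.smul_mem _ hu) hz (-c / L * t)
    (mul_pos (div_pos (neg_pos.2 hc₀) hL) ht)
  rw [hstep, real_inner_smul_right] at key
  calc f (x - (c / L) • u) ≤ f x + -c / L * t * (t⁻¹ * c) + L / 2 * (-c / L * t) ^ 2 := key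
    _ = f x - c ^ 2 / L + c ^ 2 / (2 * L) * t ^ 2 := by field_simp; ring
    _ ≤ f x - c ^ 2 / L + c ^ 2 / (2 * L) * 1 := by gcongr; exact pow_le_one₀ ht.le hu₁
    _ = f x - c ^ 2 / (2 * L) := by ring

end

theorem stmt_10_general {H : Type*} [NormedAddCommGroup H] [InnerProductSpace ℝ H]
    (A : Set H) (hA : IsCompact A) (hsym : ∀ z ∈ A, -z ∈ A)
    (f : H → ℝ) (f' : H → H)
    (hpos : ∀ x ∈ span ℝ A, x ≠ 0 → 0 < gauge (convexHull ℝ A) x)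
    (δ LA : ℝ) (hδ0 : 0 < δ) (hLA : 0 < LA)
    (hsmooth : ∀ x ∈ span ℝ A, ∀ z ∈ span ℝ A, gauge (convexHull ℝ A) z = 1 →
      ∀ γ : ℝ, 0 < γ → f (x + γ • z) ≤ f x + γ * ⟪f' x, z⟫ + LA / 2 * γ ^ 2)
    (x : H) (hx : x ∈ span ℝ A)
    (ztil : H) (hztil : ztil ∈ A)
    (hlmo : ⟪f' x, ztil⟫ ≤ δ * sInf ((fun w => ⟪f' x, w⟫) '' A)) :
    f (x - (⟪f' x, ztil⟫ / LA) • ztil) ≤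
      f x - δ ^ 2 / (2 * LA) * (sSup ((fun z => ⟪-f' x, z⟫) '' A)) ^ 2 := by
  set S := sSup ((fun z => ⟪-f' x, z⟫) '' A)
  have hS : 0 ≤ δ * S := mul_nonneg hδ0.le (sSup_image_inner_nonneg_of_neg_mem hA hsym ⟨_, hztil⟩ _)
  have hc : ⟪f' x, ztil⟫ ≤ -(δ * S) := by
    rwa [sInf_image_inner_eq_neg_sSup, mul_neg] at hlmo
  have hsq : (δ * S) ^ 2 ≤ ⟪f' x, ztil⟫ ^ 2 := by
    rw [← neg_sq ⟪f' x, ztil⟫]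
    exact pow_le_pow_left₀ hS (le_neg_of_le_neg hc) 2
  calc f (x - (⟪f' x, ztil⟫ / LA) • ztil) ≤ f x - ⟪f' x, ztil⟫ ^ 2 / (2 * LA) :=
        le_sub_sq_div_of_gauge_le_one hLA hsmooth hpos hx (subset_span hztil)
          (gauge_le_one_of_mem (subset_convexHull ℝ A hztil)) (by linarith)
    _ ≤ f x - δ ^ 2 / (2 * LA) * S ^ 2 := by
        rw [div_mul_eq_mul_div, ← mul_pow]
        gcongr

/-- one-step sufficient decrease of generalized matching pursuit
with a `δ`-approximate LMO, for `f` that is `L_A`-smooth w.r.t. the atomic norm on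
`lin(A)`: the decrease is at least `δ²/(2L_A)` times the squared dual atomic norm of
the negative gradient. -/
theorem stmt_10 {H : Type*} [NormedAddCommGroup H] [InnerProductSpace ℝ H] [CompleteSpace H]
    (A : Set H) (hA : IsCompact A) (hsym : ∀ z ∈ A, -z ∈ A)
    (f : H → ℝ) (f' : H → H) (hgrad : ∀ x, HasGradientAt f (f' x) x)
    (hconv : ConvexOn ℝ univ f)
    (habs : ∀ x ∈ span ℝ A, ∃ c : ℝ, 0 < c ∧ x ∈ c • convexHull ℝ A)
    (hpos : ∀ x ∈ span ℝ A, x ≠ 0 → 0 < gauge (convexHull ℝ A) x)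
    (δ LA : ℝ) (hδ0 : 0 < δ) (hδ1 : δ ≤ 1) (hLA : 0 < LA)
    (hsmooth : ∀ x ∈ span ℝ A, ∀ z ∈ span ℝ A, gauge (convexHull ℝ A) z = 1 →
      ∀ γ : ℝ, 0 < γ → f (x + γ • z) ≤ f x + γ * ⟪f' x, z⟫ + LA / 2 * γ ^ 2)
    (x : H) (hx : x ∈ span ℝ A)
    (ztil : H) (hztil : ztil ∈ A)
    (hlmo : ⟪f' x, ztil⟫ ≤ δ * sInf ((fun w => ⟪f' x, w⟫) '' A)) :
    f (x - (⟪f' x, ztil⟫ / LA) • ztil) ≤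
      f x - δ ^ 2 / (2 * LA) * (sSup ((fun z => ⟪-f' x, z⟫) '' A)) ^ 2 :=
  stmt_10_general A hA hsym f f' hpos δ LA hδ0 hLA hsmooth x hx ztil hztil hlmo
end

section
/- Let c > 0 and let (α_t)_{t≥1} be a sequence of positive reals with partial sums β_t := Σ_{i=1}^t α_i (and β₀ := 0) satisfying, for every t ≥ 0, the recurrence c·α_{t+1}² = β_t + α_{t+1}. Then for every t ≥ 1: α_t ≥ t/(2c), and consequently β_t ≥ t·(t+1)/(4c). -/
/-- growth of the momentum coefficients in accelerated matching
pursuit: if `c·α_{t+1}² = β_t + α_{t+1}` with `β_t = Σ_{i=1}^t α_i`, then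
`α_t ≥ t/(2c)` and `β_t ≥ t(t+1)/(4c)` for all `t ≥ 1`. -/
theorem stmt_18 (c : ℝ) (hc : 0 < c) (α β : ℕ → ℝ)
    (hαpos : ∀ t : ℕ, 1 ≤ t → 0 < α t)
    (hβ : ∀ t : ℕ, β t = ∑ i ∈ Finset.range t, α (i + 1))
    (hrec : ∀ t : ℕ, c * α (t + 1) ^ 2 = β t + α (t + 1)) :
    ∀ t : ℕ, 1 ≤ t →
      (t : ℝ) / (2 * c) ≤ α t ∧ (t : ℝ) * ((t : ℝ) + 1) / (4 * c) ≤ β t := by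
  have hβ0 : β 0 = 0 := by simp [hβ]
  have key : ∀ t : ℕ, (↑(t+1) : ℝ)/(2*c) ≤ α (t+1) ∧
      ((t:ℝ)+1)*((t:ℝ)+2) ≤ 4*c*(β (t+1)) := by
    intro t
    induction t with
    | zero =>
      have h1 := hrec 0
      have hα1 : 0 < α 1 := hαpos 1 le_rfl
      have hβ1 : β 1 = α 1 := by simp [hβ]
      rw [hβ0] at h1
      have hge : 1/c ≤ α 1 := by
        rw [div_le_iff₀ hc]; nlinarith
      constructor
      · push_cast
        rw [div_le_iff₀ (by positivity)]
        rw [div_le_iff₀ hc] at hge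
        nlinarith
      · rw [hβ1]; push_cast
        rw [div_le_iff₀ hc] at hge
        nlinarith
    | succ n ih =>
      obtain ⟨ihα, ihβ⟩ := ih
      have h1 := hrec (n+1)
      have hα : 0 < α (n+2) := hαpos (n+2) (by omega)
      have hβs : β (n+2) = β (n+1) + α (n+2) := by
        simp [hβ, Finset.sum_range_succ]
      have hαge : ((n:ℝ)+2) ≤ 2*c*α (n+2) := by
        by_contra h
        push_neg at h
        nlinarith [sq_nonneg (α (n+2)), mul_pos hc hα,
          mul_pos (mul_pos hc hc) (mul_pos hα hα)]
      constructor
      · push_cast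
        rw [div_le_iff₀ (by positivity)]
        push_cast
        linarith
      · rw [hβs]; push_cast; nlinarith
  intro t ht
  obtain ⟨s, rfl⟩ := Nat.exists_eq_add_of_le ht
  obtain ⟨h1, h2⟩ := key s
  rw [add_comm 1 s]
  constructor
  · exact_mod_cast h1
  · rw [div_le_iff₀ (by positivity)]
    push_cast at h2 ⊢
    linarith
end
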